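/- arXiv:1707.00523 — 11 statements merged into one kernel-verified Lean document; each statement's English description precedes it below -/
import Mathlib

section
/- For all real λ > 0, β > 0, α > 0, λ₁ > 0, t > 0 and every integer k ≥ 1, the integral ∫₀^∞ e^{-λ₁ s} ((λ₁ s)^k / k!) · e^{-λ t - β s} · s^{-1} · Φ(α, 0, λ t (β s)^α) ds equals (e^{-λ t} / k!) · (λ₁^k / (λ₁ + β)^k) · Σ_{n=1}^∞ (λ t β^α)^n Γ(α n + k) / ((λ₁ + β)^{α n} · n! · Γ(α n)). (This is the probability that a Poisson process of intensity λ₁, time-changed by an independent compound Poisson–Gamma subordinator with parameters λ, α, β, equals k.) -/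
/-!
Expand `Φ(α, 0, ·)` into its series. The `n`-th term of the integrand is a multiple of the Gamma
kernel `s ^ (α (n + 1) + k - 1) e^{-(λ₁ + β) s}`, whose integral is
`Γ(α (n + 1) + k) / (λ₁ + β) ^ (α (n + 1) + k)`. All terms are nonnegative, so the series may be
integrated termwise by monotone convergence; its pointwise convergence follows from
`1 / Γ(x) ≤ (x + 1) ^ 2`, a consequence of `Γ(x + 2) = x (x + 1) Γ(x) ≥ 1`.
-/

open Real MeasureTheory Filter Finset

/-- Wright function `Φ(ρ, δ, z) = Σ_{j≥0} z^j / (j! Γ(ρ j + δ))`. -/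
noncomputable def wright (ρ δ z : ℝ) : ℝ :=
  ∑' j : ℕ, z ^ j / ((Nat.factorial j : ℝ) * Real.Gamma (ρ * (j : ℝ) + δ))

/-- Wright function with second parameter 0:
`Φ(ρ, 0, z) = Σ_{j≥1} z^j / (j! Γ(ρ j))`. -/
noncomputable def wright0 (ρ z : ℝ) : ℝ :=
  ∑' j : ℕ, z ^ (j + 1) /
    ((Nat.factorial (j + 1) : ℝ) * Real.Gamma (ρ * ((j : ℝ) + 1)))

/-- Two-parameter Mittag-Leffler function `E_{ρ,δ}(z) = Σ_{j≥0} z^j / Γ(ρ j + δ)`. -/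
noncomputable def ml2 (ρ δ z : ℝ) : ℝ :=
  ∑' j : ℕ, z ^ j / Real.Gamma (ρ * (j : ℝ) + δ)

/-- Three-parameter generalized Mittag-Leffler function
`E^γ_{ρ,δ}(z) = Σ_{j≥0} (Γ(γ+j)/Γ(γ)) z^j / (j! Γ(ρ j + δ))`. -/
noncomputable def ml3 (γ ρ δ z : ℝ) : ℝ :=
  ∑' j : ℕ, (Real.Gamma (γ + (j : ℝ)) / Real.Gamma γ) * z ^ j /
    ((Nat.factorial j : ℝ) * Real.Gamma (ρ * (j : ℝ) + δ))

/-- Modified Bessel function of the first kind of order 0: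
`I₀(z) = Σ_{j≥0} (z/2)^{2j} / (j!)²`. -/
noncomputable def besselI0 (z : ℝ) : ℝ :=
  ∑' j : ℕ, (z / 2) ^ (2 * j) / ((Nat.factorial j : ℝ) * (Nat.factorial j : ℝ))

namespace Real

lemma inv_Gamma_le_sq_add_one {x : ℝ} (hx : 0 < x) : (Gamma x)⁻¹ ≤ (x + 1) ^ 2 := by
  have hGamma_add_two : Gamma (x + 2) = (x + 1) * x * Gamma x := by
    rw [show x + 2 = x + 1 + 1 by ring, Gamma_add_one (by positivity), Gamma_add_one hx.ne',
      mul_assoc]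
  have hone_le : 1 ≤ Gamma (x + 2) := by
    simpa [Gamma_two] using Gamma_strictMonoOn_Ici.monotoneOn (Set.mem_Ici.2 le_rfl)
      (Set.mem_Ici.2 (by linarith : (2 : ℝ) ≤ x + 2)) (by linarith)
  rw [inv_le_iff_one_le_mul₀ (Gamma_pos_of_pos hx)]
  nlinarith [Gamma_pos_of_pos hx]

lemma integrableOn_rpow_mul_exp_neg_mul_Ioi {a r : ℝ} (ha : 0 < a) (hr : 0 < r) :
    IntegrableOn (fun t : ℝ => t ^ (a - 1) * exp (-(r * t))) (Set.Ioi 0) :=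
  Integrable.of_integral_ne_zero <| by
    rw [integral_rpow_mul_exp_neg_mul_Ioi ha hr]
    positivity

end Real

lemma summable_wright0 {α : ℝ} (hα : 0 < α) (z : ℝ) :
    Summable fun j : ℕ => z ^ (j + 1) /
      ((Nat.factorial (j + 1) : ℝ) * Real.Gamma (α * ((j : ℝ) + 1))) := by
  refine Summable.of_norm_bounded
    (((summable_nat_add_iff 1).2 (Real.summable_pow_div_factorial (4 * |z|))).mul_left
      ((α + 1) ^ 2)) fun j => ?_
  have hx : 0 < α * ((j : ℝ) + 1) := by positivity
  have hGamma := Real.Gamma_pos_of_pos hx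
  have hlin : α * ((j : ℝ) + 1) + 1 ≤ (α + 1) * 2 ^ (j + 1) := by
    have : (j : ℝ) + 1 ≤ 2 ^ (j + 1) := by exact_mod_cast (Nat.lt_two_pow_self (n := j + 1)).le
    nlinarith
  have hinv : (Real.Gamma (α * ((j : ℝ) + 1)))⁻¹ ≤ (α + 1) ^ 2 * 4 ^ (j + 1) :=
    (Real.inv_Gamma_le_sq_add_one hx).trans <| by
      rw [show (4 : ℝ) ^ (j + 1) = (2 ^ (j + 1)) ^ 2 by rw [← pow_mul, mul_comm, pow_mul]; norm_num,
        ← mul_pow]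
      exact pow_le_pow_left₀ (by positivity) hlin 2
  rw [norm_div, norm_mul, norm_pow, Real.norm_eq_abs, Real.norm_of_nonneg hGamma.le,
    Real.norm_natCast, mul_pow, div_mul_eq_div_div, div_eq_mul_inv _ (Real.Gamma _)]
  calc |z| ^ (j + 1) / (j + 1).factorial * (Real.Gamma (α * ((j : ℝ) + 1)))⁻¹
      ≤ |z| ^ (j + 1) / (j + 1).factorial * ((α + 1) ^ 2 * 4 ^ (j + 1)) := by gcongr
    _ = (α + 1) ^ 2 * (4 ^ (j + 1) * |z| ^ (j + 1) / (j + 1).factorial) := by ring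

lemma integral_tsum_of_nonneg {α ι : Type*} [MeasurableSpace α] [Countable ι] {μ : Measure α}
    {f : ι → α → ℝ} (hint : ∀ i, Integrable (f i) μ) (hnonneg : ∀ i, 0 ≤ᵐ[μ] f i)
    (hsum : ∀ᵐ a ∂μ, Summable fun i => f i a) :
    ∫ a, ∑' i, f i a ∂μ = ∑' i, ∫ a, f i a ∂μ := by
  -- No integrability of the sum is assumed: if it fails, both sides are the junk value `0`.
  have hnonneg' : ∀ᵐ a ∂μ, ∀ i, 0 ≤ f i a := ae_all_iff.2 hnonneg
  have hofReal : ∀ᵐ a ∂μ, ∑' i, f i a = (∑' i, ENNReal.ofReal (f i a)).toReal := by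
    filter_upwards [hnonneg', hsum] with a ha hsa
    rw [← ENNReal.ofReal_tsum_of_nonneg ha hsa, ENNReal.toReal_ofReal (tsum_nonneg ha)]
  have hfinite : ∀ᵐ a ∂μ, ∑' i, ENNReal.ofReal (f i a) < ⊤ := by
    filter_upwards [hnonneg', hsum] with a ha hsa
    rw [← ENNReal.ofReal_tsum_of_nonneg ha hsa]
    exact ENNReal.ofReal_lt_top
  have hmeas : ∀ i, AEMeasurable (fun a => ENNReal.ofReal (f i a)) μ := fun i =>
    (hint i).aemeasurable.ennreal_ofReal
  rw [integral_congr_ae hofReal, integral_toReal (AEMeasurable.tsum hmeas) hfinite,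
    lintegral_tsum hmeas, ENNReal.tsum_toReal_eq fun i =>
      (lintegral_ofReal_ne_top_iff_integrable (hint i).1 (hnonneg i)).2 (hint i)]
  exact tsum_congr fun i => (integral_eq_lintegral_of_nonneg_ae (hnonneg i) (hint i).1).symm

lemma integral_rpow_mul_exp_mul_wright0 {α a c p : ℝ} (hα : 0 < α) (ha : 0 ≤ a) (hc : 0 < c)
    (hp : -α < p) :
    ∫ s in Set.Ioi (0 : ℝ), s ^ (p - 1) * Real.exp (-(c * s)) * wright0 α (a * s ^ α)
      = (c ^ p)⁻¹ * ∑' n : ℕ, a ^ (n + 1) * Real.Gamma (α * ((n : ℝ) + 1) + p) /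
          (c ^ (α * ((n : ℝ) + 1)) * (Nat.factorial (n + 1) : ℝ) *
            Real.Gamma (α * ((n : ℝ) + 1))) := by
  have hexponent_pos : ∀ n : ℕ, 0 < α * ((n : ℝ) + 1) + p := fun n => by
    nlinarith [(Nat.cast_nonneg n : (0 : ℝ) ≤ n)]
  set coeff : ℕ → ℝ := fun n =>
    a ^ (n + 1) / ((Nat.factorial (n + 1) : ℝ) * Real.Gamma (α * ((n : ℝ) + 1)))
  set term : ℕ → ℝ → ℝ := fun n s =>
    coeff n * (s ^ (α * ((n : ℝ) + 1) + p - 1) * Real.exp (-(c * s)))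
  have hterm : ∀ s ∈ Set.Ioi (0 : ℝ), ∀ n : ℕ,
      s ^ (p - 1) * Real.exp (-(c * s)) * ((a * s ^ α) ^ (n + 1) /
        ((Nat.factorial (n + 1) : ℝ) * Real.Gamma (α * ((n : ℝ) + 1)))) = term n s := by
    intro s hs n
    have hpow : s ^ (α * ((n : ℝ) + 1) + p - 1) = (s ^ α) ^ (n + 1) * s ^ (p - 1) := by
      rw [← Real.rpow_natCast, ← Real.rpow_mul hs.le, ← Real.rpow_add hs]
      push_cast
      ring_nf
    simp only [term, coeff, hpow, mul_pow]
    ring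
  have hexpand : Set.EqOn
      (fun s => s ^ (p - 1) * Real.exp (-(c * s)) * wright0 α (a * s ^ α))
      (fun s => ∑' n, term n s) (Set.Ioi 0) := fun s hs => by
    simp only [wright0, ← tsum_mul_left, hterm s hs]
  have hterm_integral : ∀ n, ∫ s in Set.Ioi (0 : ℝ), term n s
      = coeff n * ((1 / c) ^ (α * ((n : ℝ) + 1) + p) * Real.Gamma (α * ((n : ℝ) + 1) + p)) :=
    fun n => by
      rw [integral_const_mul, Real.integral_rpow_mul_exp_neg_mul_Ioi (hexponent_pos n) hc]
  have hterm_integrable : ∀ n, IntegrableOn (term n) (Set.Ioi 0) := fun n =>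
    (Real.integrableOn_rpow_mul_exp_neg_mul_Ioi (hexponent_pos n) hc).const_mul (coeff n)
  have hcoeff_nonneg : ∀ n, 0 ≤ coeff n := fun n => by
    have := Real.Gamma_pos_of_pos (mul_pos hα (Nat.cast_add_one_pos n))
    positivity
  rw [setIntegral_congr_fun measurableSet_Ioi hexpand, integral_tsum_of_nonneg hterm_integrable
    (fun n => ae_restrict_of_forall_mem measurableSet_Ioi fun s (hs : 0 < s) => by
      have := hcoeff_nonneg n
      positivity)
    (ae_restrict_of_forall_mem measurableSet_Ioi fun s hs =>
      ((summable_wright0 hα _).mul_left _).congr (hterm s hs)),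
    ← tsum_mul_left]
  refine tsum_congr fun n => ?_
  rw [hterm_integral, one_div, Real.inv_rpow hc.le, Real.rpow_add hc]
  simp only [coeff]
  field_simp

theorem stmt0_general (lam β α lam1 t : ℝ) (hlam : 0 < lam) (hβ : 0 < β) (hα : 0 < α)
    (hlam1 : 0 < lam1) (ht : 0 < t) (k : ℕ) :
    (∫ s in Set.Ioi (0 : ℝ),
      Real.exp (-(lam1 * s)) * ((lam1 * s) ^ k / (Nat.factorial k : ℝ)) *
        (Real.exp (-(lam * t) - β * s) * s⁻¹ * wright0 α (lam * t * (β * s) ^ α)))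
    = (Real.exp (-(lam * t)) / (Nat.factorial k : ℝ)) *
        (lam1 ^ k / (lam1 + β) ^ k) *
        ∑' n : ℕ, (lam * t * β ^ α) ^ (n + 1) *
            Real.Gamma (α * ((n : ℝ) + 1) + (k : ℝ)) /
          ((lam1 + β) ^ (α * ((n : ℝ) + 1)) * (Nat.factorial (n + 1) : ℝ) *
            Real.Gamma (α * ((n : ℝ) + 1))) := by
  have hintegrand : Set.EqOn
      (fun s => Real.exp (-(lam1 * s)) * ((lam1 * s) ^ k / (Nat.factorial k : ℝ)) *
        (Real.exp (-(lam * t) - β * s) * s⁻¹ * wright0 α (lam * t * (β * s) ^ α)))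
      (fun s => Real.exp (-(lam * t)) * lam1 ^ k / (Nat.factorial k : ℝ) *
        (s ^ ((k : ℝ) - 1) * Real.exp (-((lam1 + β) * s)) *
          wright0 α (lam * t * β ^ α * s ^ α)))
      (Set.Ioi 0) := fun s (hs : 0 < s) => by
    simp only
    rw [Real.rpow_sub_one hs.ne', Real.rpow_natCast, Real.mul_rpow hβ.le hs.le,
      mul_assoc (lam * t),
      show -((lam1 + β) * s) = -(lam1 * s) + -(β * s) by ring,
      show -(lam * t) - β * s = -(lam * t) + -(β * s) by ring, Real.exp_add, Real.exp_add]
    ring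
  rw [setIntegral_congr_fun measurableSet_Ioi hintegrand, integral_const_mul,
    integral_rpow_mul_exp_mul_wright0 hα (by positivity) (by positivity)
      (by linarith [(Nat.cast_nonneg k : (0 : ℝ) ≤ k)]), Real.rpow_natCast]
  ring

/-- pmf of a Poisson process time-changed by an independent
compound Poisson–Gamma subordinator, for `k ≥ 1`. -/
theorem stmt0 (lam β α lam1 t : ℝ) (hlam : 0 < lam) (hβ : 0 < β) (hα : 0 < α)
    (hlam1 : 0 < lam1) (ht : 0 < t) (k : ℕ) (hk : 1 ≤ k) :
    (∫ s in Set.Ioi (0 : ℝ),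
      Real.exp (-(lam1 * s)) * ((lam1 * s) ^ k / (Nat.factorial k : ℝ)) *
        (Real.exp (-(lam * t) - β * s) * s⁻¹ * wright0 α (lam * t * (β * s) ^ α)))
    = (Real.exp (-(lam * t)) / (Nat.factorial k : ℝ)) *
        (lam1 ^ k / (lam1 + β) ^ k) *
        ∑' n : ℕ, (lam * t * β ^ α) ^ (n + 1) *
            Real.Gamma (α * ((n : ℝ) + 1) + (k : ℝ)) /
          ((lam1 + β) ^ (α * ((n : ℝ) + 1)) * (Nat.factorial (n + 1) : ℝ) *
            Real.Gamma (α * ((n : ℝ) + 1))) :=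
  stmt0_general lam β α lam1 t hlam hβ hα hlam1 ht k
end

section
/- Fix reals λ > 0, β > 0, α > 0, λ₁ > 0. Define p₀(t) = exp(-λ t (1 - β^α/(λ₁+β)^α)) and, for integers k ≥ 1, p_k(t) = (e^{-λ t}/k!) (λ₁/(λ₁+β))^k Σ_{n=1}^∞ (λ t β^α)^n Γ(α n + k) / ((λ₁+β)^{α n} n! Γ(α n)). Then for every integer k ≥ 0 and every t > 0, the derivative satisfies d/dt p_k(t) = (λ β^α/(λ₁+β)^α - λ) p_k(t) + (λ β^α/(λ₁+β)^α) Σ_{m=1}^{k} (λ₁/(λ₁+β))^m (Γ(m+α)/(m! Γ(α))) p_{k-m}(t), where the sum is empty for k = 0. -/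
open Real MeasureTheory Filter Finset

/-!
Write `r = λ β^α / (λ₁ + β)^α` and `q = λ₁ / (λ₁ + β)`. Since `Γ(αn + k) / Γ(αn)` is the rising
factorial `(αn)ₖ`, one has `p_k(t) = e^{-λt} qᵏ / k! · F_k(t)` with the entire function
`F_k(t) = Σₙ (rt)ⁿ / n! · (αn)ₖ`, and `F₀(t) = e^{rt}`. Differentiating termwise replaces `(αn)ₖ`
by `r (α + αn)ₖ`, and the Chu–Vandermonde identity `(x + y)ₖ = Σᵢ C(k,i) (x)ᵢ (y)ₖ₋ᵢ` turns this
into the triangular system `F_k' = r Σᵢ C(k,i) (α)ᵢ F_{k-i}`. Multiplying by `e^{-λt} qᵏ / k!` and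
splitting off the term `i = 0` gives the difference-differential equations.
-/

open scoped Nat

theorem ascPochhammer_eval_add {S : Type*} [CommSemiring S] (x y : S) (k : ℕ) :
    (ascPochhammer S k).eval (x + y) = ∑ ij ∈ antidiagonal k,
      (k.choose ij.1 : S) * ((ascPochhammer S ij.1).eval x * (ascPochhammer S ij.2).eval y) := by
  induction k with
  | zero => simp
  | succ k ih =>
    rw [sum_antidiagonal_choose_succ_mul
      (fun i j => (ascPochhammer S i).eval x * (ascPochhammer S j).eval y), ← sum_add_distrib,
      ascPochhammer_succ_eval, ih, sum_mul]
    refine sum_congr rfl fun ij hij => ?_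
    rw [HasAntidiagonal.mem_antidiagonal] at hij
    rw [Nat.choose_symm_of_eq_add hij.symm, ascPochhammer_succ_eval, ascPochhammer_succ_eval,
      ← hij, Nat.cast_add]
    ring

theorem Real.Gamma_add_nat_div_Gamma_eq {n : ℕ} (x : ℝ) (hx : ∀ k : ℕ, x ≠ -k) :
    Gamma (x + n) / Gamma x = (ascPochhammer ℝ n).eval x := by
  induction n with
  | zero => simp [Real.Gamma_ne_zero hx]
  | succ n ih =>
    have hxn : x + n ≠ 0 := fun h => hx n (by linarith)
    rw [Nat.cast_succ, ← add_assoc, Real.Gamma_add_one hxn, ascPochhammer_succ_eval, ← ih]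
    ring

theorem Real.Gamma_add_nat_div_Gamma_eq_of_pos {x : ℝ} (hx : 0 < x) (n : ℕ) :
    Gamma (x + n) / Gamma x = (ascPochhammer ℝ n).eval x :=
  Real.Gamma_add_nat_div_Gamma_eq x fun k => by linarith [(k.cast_nonneg : (0 : ℝ) ≤ k)]

theorem abs_ascPochhammer_eval_le (x : ℝ) (k : ℕ) :
    |(ascPochhammer ℝ k).eval x| ≤ (|x| + k) ^ k := by
  induction k with
  | zero => simp
  | succ k ih =>
    rw [ascPochhammer_succ_eval, abs_mul, pow_succ, Nat.cast_succ]
    gcongr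
    · exact ih.trans (by gcongr; linarith)
    · exact (abs_add_le _ _).trans (by simp)

theorem pow_div_factorial_mul_choose (q : ℝ) {k m : ℕ} (hm : m ≤ k) :
    q ^ k / k ! * k.choose m = q ^ m / m ! * (q ^ (k - m) / (k - m)!) := by
  have hfac : (k.choose m : ℝ) * m ! * (k - m)! = k ! := by
    exact_mod_cast Nat.choose_mul_factorial_mul_factorial hm
  rw [← hfac, ← pow_mul_pow_sub q hm]
  have : (k.choose m : ℝ) ≠ 0 := by exact_mod_cast (Nat.choose_pos hm).ne'
  field_simp

theorem sum_range_succ_eq_add_sum_Icc {M : Type*} [AddCommMonoid M] (f : ℕ → M) (k : ℕ) :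
    ∑ m ∈ range (k + 1), f m = f 0 + ∑ m ∈ Icc 1 k, f m := by
  rw [range_eq_Ico, sum_eq_sum_Ico_succ_bot k.succ_pos, zero_add, Nat.succ_eq_add_one,
    Ico_add_one_right_eq_Icc]

section FactorialBound

variable {a : ℕ → ℝ} {C y : ℝ}

theorem summable_mul_pow_of_abs_le (h : ∀ n, |a n| ≤ C * (y ^ n / n !)) (x : ℝ) :
    Summable fun n => a n * x ^ n := by
  refine .of_norm_bounded ((Real.summable_pow_div_factorial (y * |x|)).mul_left C) fun n => ?_
  calc ‖a n * x ^ n‖ = |a n| * |x| ^ n := by simp only [norm_mul, norm_pow, Real.norm_eq_abs]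
    _ ≤ C * (y ^ n / n !) * |x| ^ n := by gcongr; exact h n
    _ = C * ((y * |x|) ^ n / n !) := by ring

theorem hasDerivAt_tsum_mul_pow_of_abs_le (h : ∀ n, |a n| ≤ C * (y ^ n / n !)) (t : ℝ) :
    HasDerivAt (fun x => ∑' n, a n * x ^ n) (∑' n, (n + 1) * a (n + 1) * t ^ n) t := by
  have hshift : ∀ x, ∑' n, a n * x ^ n = a 0 + ∑' n, a (n + 1) * x ^ (n + 1) := fun x => by
    rw [(summable_mul_pow_of_abs_le h x).tsum_eq_zero_add, pow_zero, mul_one]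
  simp_rw [hshift]
  refine HasDerivAt.const_add _ ?_
  set R := |t| + 1
  have hbound : ∀ n, ∀ x ∈ Metric.ball (0 : ℝ) R,
      ‖(n + 1) * a (n + 1) * x ^ n‖ ≤ C * y * ((y * R) ^ n / n !) := fun n x hx => by
    have hxR : |x| ≤ R := by simpa using (Metric.mem_ball.mp hx).le
    calc ‖(n + 1) * a (n + 1) * x ^ n‖ = (n + 1) * |a (n + 1)| * |x| ^ n := by
          simp only [norm_mul, norm_pow, Real.norm_eq_abs]
          rw [abs_of_nonneg (by positivity : (0 : ℝ) ≤ n + 1)]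
      _ ≤ (n + 1) * |a (n + 1)| * R ^ n := by gcongr
      _ ≤ (n + 1) * (C * (y ^ (n + 1) / (n + 1)!)) * R ^ n := by gcongr; exact h _
      _ = C * y * ((y * R) ^ n / n !) := by
          rw [Nat.factorial_succ]; push_cast; field_simp
          rw [pow_succ, mul_pow]; ring
  refine hasDerivAt_tsum_of_isPreconnected
    ((Real.summable_pow_div_factorial (y * R)).mul_left (C * y)) Metric.isOpen_ball
    (convex_ball 0 R).isPreconnected (fun n x _ => ?_) hbound
    (Metric.mem_ball_self (by positivity))
    ((summable_nat_add_iff 1).mpr (summable_mul_pow_of_abs_le h 0)) (by simp [R])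
  exact ((hasDerivAt_pow (n + 1) x).const_mul (a (n + 1))).congr_deriv (by push_cast; ring)

end FactorialBound

-- `(α n)ₖ = Γ(α n + k) / Γ(α n)` for `n ≥ 1`; the term `n = 0` is `1` if `k = 0` and `0`
-- otherwise, so `pochhammerExp α r 0 t = exp (r t)` while for `k ≥ 1` the series starts at
-- `n = 1` as in `p_k`.
noncomputable def pochhammerExpCoeff (α r : ℝ) (k n : ℕ) : ℝ :=
  r ^ n / n ! * (ascPochhammer ℝ k).eval (α * n)

noncomputable def pochhammerExp (α r : ℝ) (k : ℕ) (t : ℝ) : ℝ :=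
  ∑' n, pochhammerExpCoeff α r k n * t ^ n

theorem abs_pochhammerExpCoeff_le (α r : ℝ) (k n : ℕ) :
    |pochhammerExpCoeff α r k n| ≤ (|α| + k) ^ k * ((2 ^ k * |r|) ^ n / n !) := by
  have hlin : |α * n| + k ≤ (|α| + k) * 2 ^ n := by
    have h2 : (n : ℝ) + 1 ≤ 2 ^ n := by exact_mod_cast Nat.lt_two_pow_self
    rw [abs_mul, Nat.abs_cast]
    nlinarith [abs_nonneg α, (k.cast_nonneg : (0 : ℝ) ≤ k), (n.cast_nonneg : (0 : ℝ) ≤ n)]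
  calc |pochhammerExpCoeff α r k n| ≤ |r| ^ n / n ! * (|α * n| + k) ^ k := by
        rw [pochhammerExpCoeff, abs_mul, abs_div, abs_pow, Nat.abs_cast]
        gcongr
        exact abs_ascPochhammer_eval_le _ _
    _ ≤ |r| ^ n / n ! * ((|α| + k) * 2 ^ n) ^ k := by gcongr
    _ = (|α| + k) ^ k * ((2 ^ k * |r|) ^ n / n !) := by
        rw [mul_pow, mul_pow, ← pow_mul, ← pow_mul, mul_comm n k]; ring

theorem summable_pochhammerExpCoeff_mul_pow (α r : ℝ) (k : ℕ) (t : ℝ) :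
    Summable fun n => pochhammerExpCoeff α r k n * t ^ n :=
  summable_mul_pow_of_abs_le (abs_pochhammerExpCoeff_le α r k) t

theorem pochhammerExp_zero (α r t : ℝ) : pochhammerExp α r 0 t = exp (r * t) := by
  rw [Real.exp_eq_exp_ℝ, ← (NormedSpace.expSeries_div_hasSum_exp (r * t)).tsum_eq]
  simp only [pochhammerExp, pochhammerExpCoeff, ascPochhammer_zero, Polynomial.eval_one, mul_one]
  congr with n
  ring

theorem succ_mul_pochhammerExpCoeff_succ (α r : ℝ) (k n : ℕ) :
    (n + 1) * pochhammerExpCoeff α r k (n + 1) = r * ∑ ij ∈ antidiagonal k,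
      k.choose ij.1 * (ascPochhammer ℝ ij.1).eval α * pochhammerExpCoeff α r ij.2 n := by
  have hfac : ((n + 1) ! : ℝ) = (n + 1) * n ! := by push_cast [Nat.factorial_succ]; ring
  have hshift : α * ((n + 1 : ℕ) : ℝ) = α + α * n := by push_cast; ring
  rw [pochhammerExpCoeff, hshift, ascPochhammer_eval_add, mul_sum, mul_sum, mul_sum]
  refine sum_congr rfl fun ij _ => ?_
  rw [pochhammerExpCoeff, hfac]
  field_simp
  ring

theorem hasDerivAt_pochhammerExp (α r : ℝ) (k : ℕ) (t : ℝ) :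
    HasDerivAt (pochhammerExp α r k) (r * ∑ ij ∈ antidiagonal k,
      k.choose ij.1 * (ascPochhammer ℝ ij.1).eval α * pochhammerExp α r ij.2 t) t := by
  refine (hasDerivAt_tsum_mul_pow_of_abs_le (abs_pochhammerExpCoeff_le α r k) t).congr_deriv ?_
  simp_rw [succ_mul_pochhammerExpCoeff_succ, pochhammerExp, mul_sum, sum_mul]
  rw [Summable.tsum_finsetSum fun ij _ => ?_]
  · refine sum_congr rfl fun ij _ => ?_
    rw [← tsum_mul_left, ← tsum_mul_left]
    exact tsum_congr fun n => by ring
  · simpa only [mul_assoc] using (summable_pochhammerExpCoeff_mul_pow α r ij.2 t).mul_left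
      (r * (k.choose ij.1 * (ascPochhammer ℝ ij.1).eval α))

theorem hasDerivAt_pow_div_factorial_mul_pochhammerExp (α r q : ℝ) (k : ℕ) (t : ℝ) :
    HasDerivAt (fun x => q ^ k / k ! * pochhammerExp α r k x)
      (r * (q ^ k / k ! * pochhammerExp α r k t) + r * ∑ m ∈ Icc 1 k,
        q ^ m * (ascPochhammer ℝ m).eval α / m ! *
          (q ^ (k - m) / (k - m)! * pochhammerExp α r (k - m) t)) t := by
  refine ((hasDerivAt_pochhammerExp α r k t).const_mul _).congr_deriv ?_
  have hterm : ∀ m ∈ range (k + 1),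
      q ^ k / k ! * (k.choose m * (ascPochhammer ℝ m).eval α * pochhammerExp α r (k - m) t) =
        q ^ m * (ascPochhammer ℝ m).eval α / m ! *
          (q ^ (k - m) / (k - m)! * pochhammerExp α r (k - m) t) := fun m hm => by
    rw [← mul_assoc, ← mul_assoc,
      pow_div_factorial_mul_choose q (Nat.lt_succ_iff.mp (mem_range.mp hm))]
    ring
  rw [Nat.sum_antidiagonal_eq_sum_range_succ
    (fun i j => (k.choose i : ℝ) * (ascPochhammer ℝ i).eval α * pochhammerExp α r j t),
    mul_left_comm, mul_sum, sum_congr rfl hterm, sum_range_succ_eq_add_sum_Icc]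
  simp only [pow_zero, ascPochhammer_zero, Polynomial.eval_one, Nat.factorial_zero, Nat.cast_one,
    div_one, mul_one, one_mul, Nat.sub_zero]
  ring

theorem tsum_gamma_ratio_eq_pochhammerExp {α B : ℝ} (hα : 0 < α) (hB : 0 < B) {k : ℕ}
    (hk : k ≠ 0) (c t : ℝ) :
    ∑' n : ℕ, (c * t) ^ (n + 1) * Gamma (α * ((n : ℝ) + 1) + k) /
        (B ^ (α * ((n : ℝ) + 1)) * (n + 1)! * Gamma (α * ((n : ℝ) + 1))) =
      pochhammerExp α (c / B ^ α) k t := by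
  rw [pochhammerExp, (summable_pochhammerExpCoeff_mul_pow _ _ k t).tsum_eq_zero_add,
    pochhammerExpCoeff, Nat.cast_zero, mul_zero, ascPochhammer_ne_zero_eval_zero ℝ hk, mul_zero,
    zero_mul, zero_add]
  refine tsum_congr fun n => ?_
  have hpos : 0 < α * ((n + 1 : ℕ) : ℝ) := by positivity
  rw [show α * ((n : ℝ) + 1) = α * ((n + 1 : ℕ) : ℝ) by push_cast; ring,
    Real.rpow_mul_natCast hB.le, pochhammerExpCoeff,
    ← Real.Gamma_add_nat_div_Gamma_eq_of_pos hpos]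
  have := (Real.Gamma_pos_of_pos hpos).ne'
  have := (Real.rpow_pos_of_pos hB α).ne'
  rw [div_pow]
  field_simp
  ring

theorem stmt1_general (lam β α lam1 : ℝ) (hβ : 0 < β) (hα : 0 < α)
    (hlam1 : 0 < lam1) (p : ℕ → ℝ → ℝ)
    (hp0 : ∀ t : ℝ, p 0 t = Real.exp (-(lam * t) * (1 - β ^ α / (lam1 + β) ^ α)))
    (hpk : ∀ k : ℕ, 1 ≤ k → ∀ t : ℝ,
      p k t = (Real.exp (-(lam * t)) / (Nat.factorial k : ℝ)) *
        (lam1 / (lam1 + β)) ^ k *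
        ∑' n : ℕ, (lam * t * β ^ α) ^ (n + 1) *
            Real.Gamma (α * ((n : ℝ) + 1) + (k : ℝ)) /
          ((lam1 + β) ^ (α * ((n : ℝ) + 1)) * (Nat.factorial (n + 1) : ℝ) *
            Real.Gamma (α * ((n : ℝ) + 1)))) :
    ∀ (k : ℕ) (t : ℝ), 0 < t →
      HasDerivAt (p k)
        ((lam * β ^ α / (lam1 + β) ^ α - lam) * p k t +
          lam * β ^ α / (lam1 + β) ^ α *
            ∑ m ∈ Finset.Icc 1 k, (lam1 / (lam1 + β)) ^ m *
              (Real.Gamma ((m : ℝ) + α) / ((Nat.factorial m : ℝ) * Real.Gamma α)) *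
              p (k - m) t) t := by
  intro k t _
  set r := lam * β ^ α / (lam1 + β) ^ α
  set q := lam1 / (lam1 + β)
  have hp : ∀ j x, p j x = exp (-(lam * x)) * (q ^ j / j ! * pochhammerExp α r j x) := by
    intro j x
    rcases Nat.eq_zero_or_pos j with rfl | hj
    · rw [hp0, pochhammerExp_zero]
      simp only [pow_zero, Nat.factorial_zero, Nat.cast_one, div_one, one_mul, ← exp_add]
      congr 1
      ring
    · rw [hpk j hj x, ← tsum_gamma_ratio_eq_pochhammerExp hα (by positivity) hj.ne']
      simp_rw [mul_right_comm lam x]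
      ring
  have hcoef : ∀ m : ℕ, Gamma (m + α) / (m ! * Gamma α) = (ascPochhammer ℝ m).eval α / m ! :=
    fun m => by rw [add_comm, mul_comm, ← div_div, Real.Gamma_add_nat_div_Gamma_eq_of_pos hα]
  have hsum : ∑ m ∈ Icc 1 k, q ^ m * ((ascPochhammer ℝ m).eval α / m !) * p (k - m) t =
      exp (-(lam * t)) * ∑ m ∈ Icc 1 k, q ^ m * (ascPochhammer ℝ m).eval α / m ! *
        (q ^ (k - m) / (k - m)! * pochhammerExp α r (k - m) t) := by
    rw [mul_sum]
    exact sum_congr rfl fun m _ => by rw [hp]; ring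
  simp only [hcoef]
  rw [hsum, funext (hp k)]
  refine (((hasDerivAt_id t).const_mul lam).neg.exp.mul
    (hasDerivAt_pow_div_factorial_mul_pochhammerExp α r q k t)).congr_deriv ?_
  simp only [Pi.neg_apply, id]
  ring

/-- difference-differential equations for the pmf of a Poisson
process time-changed by a compound Poisson–Gamma subordinator. -/
theorem stmt1 (lam β α lam1 : ℝ) (hlam : 0 < lam) (hβ : 0 < β) (hα : 0 < α)
    (hlam1 : 0 < lam1) (p : ℕ → ℝ → ℝ)
    (hp0 : ∀ t : ℝ, p 0 t = Real.exp (-(lam * t) * (1 - β ^ α / (lam1 + β) ^ α)))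
    (hpk : ∀ k : ℕ, 1 ≤ k → ∀ t : ℝ,
      p k t = (Real.exp (-(lam * t)) / (Nat.factorial k : ℝ)) *
        (lam1 / (lam1 + β)) ^ k *
        ∑' n : ℕ, (lam * t * β ^ α) ^ (n + 1) *
            Real.Gamma (α * ((n : ℝ) + 1) + (k : ℝ)) /
          ((lam1 + β) ^ (α * ((n : ℝ) + 1)) * (Nat.factorial (n + 1) : ℝ) *
            Real.Gamma (α * ((n : ℝ) + 1)))) :
    ∀ (k : ℕ) (t : ℝ), 0 < t →
      HasDerivAt (p k)
        ((lam * β ^ α / (lam1 + β) ^ α - lam) * p k t +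
          lam * β ^ α / (lam1 + β) ^ α *
            ∑ m ∈ Finset.Icc 1 k, (lam1 / (lam1 + β)) ^ m *
              (Real.Gamma ((m : ℝ) + α) / ((Nat.factorial m : ℝ) * Real.Gamma α)) *
              p (k - m) t) t :=
  stmt1_general lam β α lam1 hβ hα hlam1 p hp0 hpk
end

section
/- For all real λ > 0, β > 0, α > 0, t ≥ 0 and every real w > -β, one has e^{-λ t} + ∫₀^∞ e^{-w u} · e^{-λ t - β u} · u^{-1} · Φ(α, 0, λ t (β u)^α) du = exp(-λ t (1 - β^α (β + w)^{-α})). -/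
/-!
Expanding the Wright function termwise, `u⁻¹ Φ(α, 0, z u^α)` is a series of Gamma densities:
its `j`-th term is `z^j u^(αj-1) / (j! Γ(αj))`, whose Laplace transform at `c > 0` is
`(z c^(-α))^j / j!`. The series of absolute values converges after integration, so the
integral and the sum may be exchanged, and the transformed series is `exp (z c^(-α)) - 1`.
With `z = λ t β^α` and `c = β + w`, adding the atom `e^(-λt)` gives the theorem.
-/

open Real MeasureTheory Filter Finset

open Set
open scoped Nat

noncomputable def wrightLaplaceTerm (α c z : ℝ) (j : ℕ) (u : ℝ) : ℝ :=
  z ^ (j + 1) / ((j + 1)! * Gamma (α * (j + 1))) * (u ^ (α * (j + 1) - 1) * exp (-(c * u)))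

lemma tsum_pow_succ_div_factorial (y : ℝ) :
    ∑' j : ℕ, y ^ (j + 1) / ((j + 1)! : ℝ) = exp y - 1 := by
  have hexp : exp y = ∑' n : ℕ, y ^ n / (n ! : ℝ) := by
    rw [exp_eq_exp_ℝ, NormedSpace.exp_eq_tsum_div]
  rw [hexp, (summable_pow_div_factorial y).tsum_eq_zero_add]
  simp

section WrightLaplace

variable {α c : ℝ}

lemma exp_neg_mul_mul_inv_mul_wright0 (z : ℝ) {u : ℝ} (hu : 0 < u) :
    exp (-(c * u)) * u⁻¹ * wright0 α (z * u ^ α) = ∑' j : ℕ, wrightLaplaceTerm α c z j u := by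
  rw [wright0, ← tsum_mul_left]
  refine tsum_congr fun j => ?_
  have hpow : (z * u ^ α) ^ (j + 1) = z ^ (j + 1) * u ^ (α * (j + 1)) := by
    rw [mul_pow, ← rpow_natCast (u ^ α), ← rpow_mul hu.le]
    push_cast
    rfl
  rw [wrightLaplaceTerm, hpow, rpow_sub hu, rpow_one]
  ring

lemma norm_wrightLaplaceTerm (hα : 0 < α) (z : ℝ) (j : ℕ) {u : ℝ} (hu : 0 ≤ u) :
    ‖wrightLaplaceTerm α c z j u‖ = wrightLaplaceTerm α c |z| j u := by
  have hΓ : 0 < Gamma (α * (j + 1)) := Gamma_pos_of_pos (by positivity)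
  rw [wrightLaplaceTerm, wrightLaplaceTerm, norm_mul, norm_div, norm_mul, Real.norm_eq_abs,
    Real.norm_eq_abs, Real.norm_eq_abs, Real.norm_eq_abs, abs_pow, abs_of_pos hΓ,
    Nat.abs_cast,
    abs_of_nonneg (show 0 ≤ u ^ (α * (j + 1) - 1) * exp (-(c * u)) by positivity)]

lemma integrableOn_wrightLaplaceTerm (hα : 0 < α) (hc : 0 < c) (z : ℝ) (j : ℕ) :
    IntegrableOn (wrightLaplaceTerm α c z j) (Ioi 0) := by
  have hs : -1 < α * (j + 1) - 1 := by linarith [show 0 < α * (j + 1) by positivity]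
  have h := integrableOn_rpow_mul_exp_neg_mul_rpow hs one_pos hc
  simp only [rpow_one, neg_mul] at h
  exact h.const_mul _

lemma integral_wrightLaplaceTerm (hα : 0 < α) (hc : 0 < c) (z : ℝ) (j : ℕ) :
    ∫ u in Ioi 0, wrightLaplaceTerm α c z j u = (z * c ^ (-α)) ^ (j + 1) / (j + 1)! := by
  have hs : 0 < α * (j + 1) := by positivity
  have hΓ : Gamma (α * (j + 1)) ≠ 0 := (Gamma_pos_of_pos hs).ne'
  have hcpow : (c ^ (-α)) ^ (j + 1) = (1 / c) ^ (α * (j + 1)) := by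
    rw [← rpow_natCast, ← rpow_mul hc.le, one_div, inv_rpow hc.le, ← rpow_neg hc.le]
    push_cast
    ring_nf
  simp only [wrightLaplaceTerm]
  rw [integral_const_mul, integral_rpow_mul_exp_neg_mul_Ioi hs hc, mul_pow, hcpow]
  field_simp

theorem integral_exp_neg_mul_mul_inv_mul_wright0 (hα : 0 < α) (hc : 0 < c) (z : ℝ) :
    ∫ u in Ioi 0, exp (-(c * u)) * u⁻¹ * wright0 α (z * u ^ α) = exp (z * c ^ (-α)) - 1 := by
  have hnorm : ∀ j : ℕ, ∫ u in Ioi 0, ‖wrightLaplaceTerm α c z j u‖ =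
      (|z| * c ^ (-α)) ^ (j + 1) / (j + 1)! := fun j => by
    rw [← integral_wrightLaplaceTerm hα hc]
    exact setIntegral_congr_fun measurableSet_Ioi
      fun u hu => norm_wrightLaplaceTerm hα z j (le_of_lt hu)
  have hsummable : Summable fun j : ℕ => ∫ u in Ioi 0, ‖wrightLaplaceTerm α c z j u‖ := by
    simp only [hnorm]
    exact (summable_nat_add_iff 1).2 (summable_pow_div_factorial _)
  rw [setIntegral_congr_fun measurableSet_Ioi
      fun u hu => exp_neg_mul_mul_inv_mul_wright0 z hu,
    ← integral_tsum_of_summable_integral_norm (integrableOn_wrightLaplaceTerm hα hc z) hsummable]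
  simp only [integral_wrightLaplaceTerm hα hc]
  exact tsum_pow_succ_div_factorial _

end WrightLaplace

theorem stmt2_general (lam β α : ℝ) (hβ : 0 < β) (hα : 0 < α)
    (t : ℝ) (w : ℝ) (hw : -β < w) :
    Real.exp (-(lam * t)) +
      (∫ u in Set.Ioi (0 : ℝ),
        Real.exp (-(w * u)) *
          (Real.exp (-(lam * t) - β * u) * u⁻¹ * wright0 α (lam * t * (β * u) ^ α)))
    = Real.exp (-(lam * t) * (1 - β ^ α * (β + w) ^ (-α))) := by
  have hc : 0 < β + w := by linarith
  have hintegrand : ∀ u ∈ Ioi (0 : ℝ),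
      exp (-(w * u)) * (exp (-(lam * t) - β * u) * u⁻¹ * wright0 α (lam * t * (β * u) ^ α)) =
        exp (-(lam * t)) *
          (exp (-((β + w) * u)) * u⁻¹ * wright0 α (lam * t * β ^ α * u ^ α)) := fun u hu => by
    rw [mul_rpow hβ.le (le_of_lt hu), ← mul_assoc (lam * t)]
    have hexp : exp (-(w * u)) * exp (-(lam * t) - β * u) =
        exp (-(lam * t)) * exp (-((β + w) * u)) := by
      rw [← exp_add, ← exp_add]
      ring_nf
    linear_combination (u⁻¹ * wright0 α (lam * t * β ^ α * u ^ α)) * hexp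
  rw [setIntegral_congr_fun measurableSet_Ioi hintegrand, integral_const_mul,
    integral_exp_neg_mul_mul_inv_mul_wright0 hα hc, mul_sub, mul_one, ← exp_add]
  ring_nf

/-- Laplace transform of the law of the compound Poisson–Gamma
subordinator `G_N(t)` with parameters `λ, α, β`. -/
theorem stmt2 (lam β α : ℝ) (hlam : 0 < lam) (hβ : 0 < β) (hα : 0 < α)
    (t : ℝ) (ht : 0 ≤ t) (w : ℝ) (hw : -β < w) :
    Real.exp (-(lam * t)) +
      (∫ u in Set.Ioi (0 : ℝ),
        Real.exp (-(w * u)) *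
          (Real.exp (-(lam * t) - β * u) * u⁻¹ * wright0 α (lam * t * (β * u) ^ α)))
    = Real.exp (-(lam * t) * (1 - β ^ α * (β + w) ^ (-α))) :=
  stmt2_general lam β α hβ hα t w hw
end

section
/- For all real λ > 0, β > 0, λ₁ > 0, t ≥ 0 and every integer k ≥ 1, (e^{-λ t}/k!) · (λ₁/(λ₁+β))^k · Σ_{n=1}^∞ (λ t β)^n Γ(n + k) / ((λ₁+β)^n · n! · Γ(n)) = e^{-λ t} · (λ₁^k λ β t / (λ₁+β)^{k+1}) · E^{k+1}_{1,2}(λ β t/(λ₁+β)). -/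
open Real MeasureTheory Filter Finset

/-- the pmf of a Poisson process time-changed by a compound
Poisson-exponential subordinator, expressed via the generalized
Mittag-Leffler function. -/
theorem stmt3 (lam β lam1 t : ℝ) (hlam : 0 < lam) (hβ : 0 < β)
    (hlam1 : 0 < lam1) (ht : 0 ≤ t) (k : ℕ) (hk : 1 ≤ k) :
    (Real.exp (-(lam * t)) / (Nat.factorial k : ℝ)) * (lam1 / (lam1 + β)) ^ k *
      (∑' n : ℕ, (lam * t * β) ^ (n + 1) * Real.Gamma (((n : ℝ) + 1) + (k : ℝ)) /
        ((lam1 + β) ^ (n + 1) * (Nat.factorial (n + 1) : ℝ) *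
          Real.Gamma ((n : ℝ) + 1)))
    = Real.exp (-(lam * t)) * (lam1 ^ k * lam * β * t / (lam1 + β) ^ (k + 1)) *
        ml3 ((k : ℝ) + 1) 1 2 (lam * β * t / (lam1 + β)) := by
  have hs : lam1 + β ≠ 0 := by positivity
  rw [ml3, ← tsum_mul_left, ← tsum_mul_left]
  refine tsum_congr fun n => ?_
  have h1 : ((n : ℝ) + 1) + (k : ℝ) = (k : ℝ) + 1 + (n : ℝ) := by ring
  have h2 : Real.Gamma ((n : ℝ) + 1) = (Nat.factorial n : ℝ) :=
    Real.Gamma_nat_eq_factorial n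
  have h3 : (1 : ℝ) * (n : ℝ) + 2 = ((n + 1 : ℕ) : ℝ) + 1 := by push_cast; ring
  rw [h1, h2, h3, Real.Gamma_nat_eq_factorial (n + 1), Real.Gamma_nat_eq_factorial k]
  have hfk : (Nat.factorial k : ℝ) ≠ 0 := by positivity
  have hfn : (Nat.factorial n : ℝ) ≠ 0 := by positivity
  have hfn1 : (Nat.factorial (n + 1) : ℝ) ≠ 0 := by positivity
  rw [div_pow, div_pow]
  field_simp
  ring
end

section
/- Fix reals λ > 0, β > 0, λ₁ > 0. Define p₀^E(t) = exp(-λ λ₁ t/(λ₁+β)) and, for integers k ≥ 1, p_k^E(t) = e^{-λ t} (λ₁^k λ β t/(λ₁+β)^{k+1}) E^{k+1}_{1,2}(λ β t/(λ₁+β)). Then for every integer k ≥ 0 and every t > 0, d/dt p_k^E(t) = -(λ λ₁/(λ₁+β)) p_k^E(t) + (λ β/(λ₁+β)) Σ_{m=1}^{k} (λ₁/(λ₁+β))^m p_{k-m}^E(t), where the sum is empty for k = 0. -/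
open Real MeasureTheory Filter Finset

/-! The substitution `x = λβt/(λ₁+β)` and `r = λ₁/(λ₁+β)` gives `p_k(t) = e^{-λt} rᵏ q_k(x)`, where
`q_k = Σⱼ c_{k,j} xʲ/j!` (`mlSeries`) has `q₀ = exp`, `q_k(x) = x E^{k+1}_{1,2}(x)` for `k ≥ 1`, and
`c_{k,j+1} = C(k+j, j)`. By the hockey-stick identity `c_{k,j+1} = Σ_{i ≤ k} c_{i,j}`, so
`q_k' = Σ_{i ≤ k} q_i`, and the equations follow from the product rule since
`λ = λλ₁/(λ₁+β) + λβ/(λ₁+β)`. -/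

noncomputable def egf (a : ℕ → ℝ) (x : ℝ) : ℝ :=
  ∑' j : ℕ, a j * x ^ j / (j.factorial : ℝ)

section egf

variable {a : ℕ → ℝ} {C R : ℝ}

lemma summable_egf_term (ha : ∀ j, |a j| ≤ C * R ^ j) (x : ℝ) :
    Summable fun j : ℕ => a j * x ^ j / (j.factorial : ℝ) := by
  refine .of_norm_bounded ((Real.summable_pow_div_factorial (R * |x|)).mul_left C) fun j => ?_
  rw [norm_div, norm_mul, norm_pow, Real.norm_natCast, Real.norm_eq_abs, Real.norm_eq_abs]
  calc |a j| * |x| ^ j / (j.factorial : ℝ) ≤ C * R ^ j * |x| ^ j / (j.factorial : ℝ) := by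
        gcongr; exact ha j
    _ = C * ((R * |x|) ^ j / (j.factorial : ℝ)) := by ring

lemma egf_eq_add_tsum (ha : ∀ j, |a j| ≤ C * R ^ j) (x : ℝ) :
    egf a x = a 0 + ∑' j : ℕ, a (j + 1) * x ^ (j + 1) / ((j + 1).factorial : ℝ) := by
  rw [egf, (summable_egf_term ha x).tsum_eq_zero_add]
  simp

lemma hasDerivAt_egf (ha : ∀ j, |a j| ≤ C * R ^ j) (x : ℝ) :
    HasDerivAt (egf a) (egf (fun j => a (j + 1)) x) x := by
  set ρ := |x| + 1
  have hx : x ∈ Metric.ball (0 : ℝ) ρ := by simp [ρ]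
  have hterm : ∀ (j : ℕ) (y : ℝ),
      HasDerivAt (fun y => a (j + 1) * y ^ (j + 1) / ((j + 1).factorial : ℝ))
        (a (j + 1) * y ^ j / (j.factorial : ℝ)) y := by
    intro j y
    refine (((hasDerivAt_pow (j + 1) y).const_mul (a (j + 1))).div_const _).congr_deriv ?_
    rw [Nat.factorial_succ]
    push_cast
    field_simp
  have hbound : ∀ (j : ℕ), ∀ y ∈ Metric.ball (0 : ℝ) ρ,
      ‖a (j + 1) * y ^ j / (j.factorial : ℝ)‖ ≤ C * R * ((R * ρ) ^ j / (j.factorial : ℝ)) := by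
    intro j y hy
    rw [mem_ball_zero_iff, Real.norm_eq_abs] at hy
    rw [norm_div, norm_mul, norm_pow, Real.norm_natCast, Real.norm_eq_abs, Real.norm_eq_abs]
    calc |a (j + 1)| * |y| ^ j / (j.factorial : ℝ)
        ≤ C * R ^ (j + 1) * ρ ^ j / (j.factorial : ℝ) := by
          gcongr
          · exact (abs_nonneg _).trans (ha _)
          · exact ha _
      _ = C * R * ((R * ρ) ^ j / (j.factorial : ℝ)) := by rw [pow_succ, mul_pow]; ring
  have hsplit : egf a =
      fun y => a 0 + ∑' j : ℕ, a (j + 1) * y ^ (j + 1) / ((j + 1).factorial : ℝ) :=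
    funext (egf_eq_add_tsum ha)
  rw [hsplit]
  exact (hasDerivAt_tsum_of_isPreconnected
    ((Real.summable_pow_div_factorial (R * ρ)).mul_left (C * R)) Metric.isOpen_ball
    (convex_ball _ _).isPreconnected (fun j y _ => hterm j y) hbound hx
    ((summable_nat_add_iff 1).mpr (summable_egf_term ha x)) hx).const_add _

end egf

noncomputable def mlCoeff (k : ℕ) : ℕ → ℝ
  | 0 => if k = 0 then 1 else 0
  | j + 1 => ((k + j).choose j : ℝ)

lemma mlCoeff_zero_left (j : ℕ) : mlCoeff 0 j = 1 := by
  cases j <;> simp [mlCoeff]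

lemma abs_mlCoeff_le (k j : ℕ) : |mlCoeff k j| ≤ 2 ^ k * 2 ^ j := by
  cases j with
  | zero =>
    unfold mlCoeff
    split_ifs <;> simp [one_le_pow₀]
  | succ j =>
    rw [mlCoeff, abs_of_nonneg (by positivity), ← pow_add]
    calc ((k + j).choose j : ℝ) ≤ 2 ^ (k + j) := by exact_mod_cast Nat.choose_le_two_pow _ _
      _ ≤ 2 ^ (k + (j + 1)) := pow_le_pow_right₀ one_le_two (by omega)

lemma mlCoeff_succ (k j : ℕ) : mlCoeff k (j + 1) = ∑ i ∈ range (k + 1), mlCoeff i j := by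
  cases j with
  | zero => simp [mlCoeff]
  | succ j =>
    simp only [mlCoeff]
    rw [← add_assoc]
    exact_mod_cast (Nat.sum_range_add_choose k j).symm

noncomputable def mlSeries (k : ℕ) : ℝ → ℝ :=
  egf (mlCoeff k)

lemma mlSeries_zero : mlSeries 0 = Real.exp := by
  funext x
  simp [mlSeries, egf, mlCoeff_zero_left, Real.exp_eq_exp_ℝ, NormedSpace.exp_eq_tsum_div]

lemma mul_ml3_eq_mlSeries {k : ℕ} (hk : k ≠ 0) (x : ℝ) :
    x * ml3 ((k : ℝ) + 1) 1 2 x = mlSeries k x := by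
  rw [mlSeries, egf_eq_add_tsum (abs_mlCoeff_le k), mlCoeff, if_neg hk, zero_add, ml3,
    ← tsum_mul_left]
  refine tsum_congr fun j => ?_
  have hΓnum : Real.Gamma ((k : ℝ) + 1 + j) = ((k + j).factorial : ℝ) := by
    rw [← Real.Gamma_nat_eq_factorial]; push_cast; ring_nf
  have hΓden : Real.Gamma (1 * (j : ℝ) + 2) = ((j + 1).factorial : ℝ) := by
    rw [← Real.Gamma_nat_eq_factorial]; push_cast; ring_nf
  have hchoose : ((k + j).factorial : ℝ) = (k + j).choose j * j.factorial * k.factorial := by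
    exact_mod_cast (Nat.add_choose_mul_factorial_mul_factorial k j).symm.trans (by ring)
  rw [hΓnum, hΓden, Real.Gamma_nat_eq_factorial, hchoose, mlCoeff, pow_succ]
  field_simp

lemma hasDerivAt_mlSeries (k : ℕ) (x : ℝ) :
    HasDerivAt (mlSeries k) (∑ i ∈ range (k + 1), mlSeries i x) x := by
  refine (hasDerivAt_egf (abs_mlCoeff_le k) x).congr_deriv ?_
  simp only [mlSeries, egf, mlCoeff_succ, sum_mul, sum_div]
  exact Summable.tsum_finsetSum fun i _ => summable_egf_term (abs_mlCoeff_le i) x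

lemma sum_range_succ_eq_add_sum_Icc_sub {M : Type*} [AddCommMonoid M] (f : ℕ → M) (k : ℕ) :
    ∑ i ∈ range (k + 1), f i = f k + ∑ m ∈ Icc 1 k, f (k - m) := by
  rw [← sum_range_reflect, sum_range_succ', add_comm, range_eq_Ico, ← Ico_add_one_right_eq_Icc,
    ← sum_Ico_add' (fun m => f (k - m)) 0 k 1]
  simp

theorem stmt4_general (lam β lam1 : ℝ) (hβ : 0 < β) (hlam1 : 0 < lam1)
    (p : ℕ → ℝ → ℝ)
    (hp0 : ∀ t : ℝ, p 0 t = Real.exp (-(lam * lam1 * t / (lam1 + β))))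
    (hpk : ∀ k : ℕ, 1 ≤ k → ∀ t : ℝ,
      p k t = Real.exp (-(lam * t)) *
        (lam1 ^ k * lam * β * t / (lam1 + β) ^ (k + 1)) *
        ml3 ((k : ℝ) + 1) 1 2 (lam * β * t / (lam1 + β))) :
    ∀ (k : ℕ) (t : ℝ), 0 < t →
      HasDerivAt (p k)
        (-(lam * lam1 / (lam1 + β)) * p k t +
          lam * β / (lam1 + β) *
            ∑ m ∈ Finset.Icc 1 k, (lam1 / (lam1 + β)) ^ m * p (k - m) t) t := by
  intro k t _
  have hL : lam1 + β ≠ 0 := (add_pos hlam1 hβ).ne'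
  set r := lam1 / (lam1 + β)
  set c := lam * β / (lam1 + β)
  have hp : ∀ k s, p k s = Real.exp (-(lam * s)) * (r ^ k * mlSeries k (c * s)) := by
    intro k s
    rcases eq_or_ne k 0 with rfl | hk
    · rw [hp0, mlSeries_zero, pow_zero, one_mul, ← Real.exp_add]
      congr 1
      simp only [c]
      field_simp
      ring
    · rw [hpk k (Nat.one_le_iff_ne_zero.mpr hk), mul_div_right_comm (lam * β) s,
        ← mul_ml3_eq_mlSeries hk]
      simp only [r, c, div_pow]
      field_simp
      ring
  have hsum : ∑ m ∈ Icc 1 k, r ^ m * p (k - m) t =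
      Real.exp (-(lam * t)) * (r ^ k * ∑ m ∈ Icc 1 k, mlSeries (k - m) (c * t)) := by
    rw [mul_sum, mul_sum]
    refine sum_congr rfl fun m hm => ?_
    rw [hp, ← pow_mul_pow_sub r (mem_Icc.1 hm).2]
    ring
  have hderiv := ((hasDerivAt_id t).const_mul lam).neg.exp.mul
    (((hasDerivAt_mlSeries k (c * t)).comp t ((hasDerivAt_id t).const_mul c)).const_mul (r ^ k))
  rw [hsum, hp k t, show p k = _ from funext (hp k)]
  refine hderiv.congr_deriv ?_
  simp only [sum_range_succ_eq_add_sum_Icc_sub, Pi.neg_apply, id, Function.comp_apply, c]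
  field_simp
  ring

/-- difference-differential equations for the pmf of a Poisson
process time-changed by a compound Poisson-exponential subordinator. -/
theorem stmt4 (lam β lam1 : ℝ) (hlam : 0 < lam) (hβ : 0 < β) (hlam1 : 0 < lam1)
    (p : ℕ → ℝ → ℝ)
    (hp0 : ∀ t : ℝ, p 0 t = Real.exp (-(lam * lam1 * t / (lam1 + β))))
    (hpk : ∀ k : ℕ, 1 ≤ k → ∀ t : ℝ,
      p k t = Real.exp (-(lam * t)) *
        (lam1 ^ k * lam * β * t / (lam1 + β) ^ (k + 1)) *
        ml3 ((k : ℝ) + 1) 1 2 (lam * β * t / (lam1 + β))) :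
    ∀ (k : ℕ) (t : ℝ), 0 < t →
      HasDerivAt (p k)
        (-(lam * lam1 / (lam1 + β)) * p k t +
          lam * β / (lam1 + β) *
            ∑ m ∈ Finset.Icc 1 k, (lam1 / (lam1 + β)) ^ m * p (k - m) t) t :=
  stmt4_general lam β lam1 hβ hlam1 p hp0 hpk
end

section
/- For all real λ > 0, β > 0, t ≥ 0 and every real θ > -λ, ∫₀^∞ e^{-θ u} · λ e^{-λ u - β t} · I₀(2√(λ β u t)) du = (λ/(θ+λ)) · exp(-β t θ/(θ+λ)). -/
open Real MeasureTheory Filter Finset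

/-! Expanding `I₀(2√(c u)) = Σ (c u)^j / (j!)²` and integrating term by term against `e^{-a u}`
(each term is a Gamma integral `∫ u^j e^{-a u} = j! / a^{j+1}`) leaves the exponential series
`Σ (c/a)^j / j!`, so `∫₀^∞ e^{-a u} I₀(2√(c u)) du = e^{c/a} / a`. The theorem is the case
`a = θ + λ`, `c = λ β t`. -/

open scoped Nat

lemma integral_pow_mul_exp_neg_mul_Ioi (n : ℕ) {a : ℝ} (ha : 0 < a) :
    ∫ u in Set.Ioi (0 : ℝ), u ^ n * exp (-(a * u)) = n ! / a ^ (n + 1) := by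
  have h := integral_rpow_mul_exp_neg_mul_Ioi (a := n + 1) (by positivity) ha
  simp_rw [add_sub_cancel_right, rpow_natCast] at h
  rw [h, Gamma_nat_eq_factorial, ← Nat.cast_add_one, rpow_natCast, one_div, inv_pow,
    inv_mul_eq_div]

lemma integrableOn_pow_mul_exp_neg_mul_Ioi (n : ℕ) {a : ℝ} (ha : 0 < a) :
    IntegrableOn (fun u : ℝ ↦ u ^ n * exp (-(a * u))) (Set.Ioi 0) :=
  .of_integral_ne_zero <| by rw [integral_pow_mul_exp_neg_mul_Ioi n ha]; positivity

lemma besselI0_two_mul_sqrt {x : ℝ} (hx : 0 ≤ x) :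
    besselI0 (2 * √x) = ∑' j : ℕ, x ^ j / (j ! * j !) := by
  rw [besselI0]
  congr 1 with j
  rw [mul_div_cancel_left₀ _ two_ne_zero, pow_mul, sq_sqrt hx]

theorem integral_exp_neg_mul_mul_besselI0 {a c : ℝ} (ha : 0 < a) (hc : 0 ≤ c) :
    ∫ u in Set.Ioi (0 : ℝ), exp (-(a * u)) * besselI0 (2 * √(c * u)) = exp (c / a) / a := by
  set F : ℕ → ℝ → ℝ := fun j u ↦ c ^ j / (j ! * j !) * (u ^ j * exp (-(a * u)))
  have hF_nonneg (j : ℕ) {u : ℝ} (hu : 0 < u) : 0 ≤ F j u := by positivity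
  have hF_int (j : ℕ) : ∫ u in Set.Ioi (0 : ℝ), F j u = (c / a) ^ j / j ! / a := by
    rw [integral_const_mul, integral_pow_mul_exp_neg_mul_Ioi j ha, div_pow]
    field_simp
    ring
  have h_series : HasSum (fun j ↦ ∫ u in Set.Ioi (0 : ℝ), F j u) (exp (c / a) / a) := by
    simp_rw [hF_int, exp_eq_exp_ℝ]
    exact (NormedSpace.expSeries_div_hasSum_exp (c / a)).div_const a
  have h_norm (j : ℕ) : ∫ u in Set.Ioi (0 : ℝ), ‖F j u‖ = ∫ u in Set.Ioi (0 : ℝ), F j u :=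
    setIntegral_congr_fun measurableSet_Ioi fun u hu ↦ norm_of_nonneg (hF_nonneg j hu)
  have h_swap := hasSum_integral_of_summable_integral_norm (F := F)
    (fun j ↦ (integrableOn_pow_mul_exp_neg_mul_Ioi j ha).const_mul _)
    (by simpa only [h_norm] using h_series.summable)
  rw [h_series.unique h_swap]
  refine setIntegral_congr_fun measurableSet_Ioi fun u hu ↦ ?_
  rw [besselI0_two_mul_sqrt (mul_nonneg hc hu.le), ← tsum_mul_left]
  congr 1 with j
  simp only [F]
  ring

/-- Laplace transform of the inverse compound Poisson-exponential
process `Y(t)`. -/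
theorem stmt5 (lam β t : ℝ) (hlam : 0 < lam) (hβ : 0 < β) (ht : 0 ≤ t)
    (θ : ℝ) (hθ : -lam < θ) :
    (∫ u in Set.Ioi (0 : ℝ),
      Real.exp (-(θ * u)) *
        (lam * Real.exp (-(lam * u) - β * t) *
          besselI0 (2 * Real.sqrt (lam * β * u * t))))
    = lam / (θ + lam) * Real.exp (-(β * t * θ / (θ + lam))) := by
  have ha : 0 < θ + lam := by linarith
  have h_integrand (u : ℝ) : exp (-(θ * u)) * (lam * exp (-(lam * u) - β * t) *
        besselI0 (2 * √(lam * β * u * t))) =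
      lam * exp (-(β * t)) * (exp (-((θ + lam) * u)) * besselI0 (2 * √((lam * β * t) * u))) := by
    rw [show -((θ + lam) * u) = -(θ * u) + -(lam * u) by ring,
      show -(lam * u) - β * t = -(lam * u) + -(β * t) by ring, exp_add, exp_add,
      show lam * β * u * t = lam * β * t * u by ring]
    ring
  simp_rw [h_integrand]
  rw [integral_const_mul, integral_exp_neg_mul_mul_besselI0 ha (by positivity), mul_div_assoc',
    mul_assoc, ← exp_add, div_mul_eq_mul_div]
  congr 3
  field_simp
  ring
end

section
/- Fix reals λ > 0, β > 0, λ₁ > 0. Define p̂₀^E(t) = exp(-β λ₁ t/(λ₁+λ)) and, for integers k ≥ 1, p̂_k^E(t) = e^{-β t} (λ₁^k λ β t/(λ₁+λ)^{k+1}) E^{k+1}_{1,2}(λ β t/(λ₁+λ)); define p_k^I(t) = e^{-β t} (λ λ₁^k (k+1)/(λ₁+λ)^{k+1}) E^{k+1}_{1,1}(λ β t/(λ₁+λ)) for k ≥ 0. Then for every integer k ≥ 0 and every t > 0, d/dt p̂_k^E(t) = -β p̂_k^E(t) + (β/(k+1)) p_k^I(t). -/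
open Real MeasureTheory Filter Finset

/-! For `k ≥ 1`, with `a = λβ/(λ₁+λ)`, `p̂_k^E(t)` is `e^{-βt}` times a constant times
`t · E^{k+1}_{1,2}(a t)`, and differentiating the series termwise gives
`d/dt [t · E^γ_{1,2}(a t)] = E^γ_{1,1}(a t)` because `(j+1)/Γ(j+2) = 1/Γ(j+1)`; termwise
differentiation is legitimate because consecutive terms of `E^γ_{1,1}(z)` have ratio
`(γ+j) z/(j+1)² → 0`. For `k = 0`, `E^1_{1,1} = exp`, so `p_0^I = λ/(λ₁+λ) · p̂_0^E` and both
sides are multiples of the exponential `p̂_0^E`. -/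

noncomputable def ml3Term (γ ρ δ z : ℝ) (j : ℕ) : ℝ :=
  (Real.Gamma (γ + (j : ℝ)) / Real.Gamma γ) * z ^ j /
    ((Nat.factorial j : ℝ) * Real.Gamma (ρ * (j : ℝ) + δ))

lemma ml3_eq_tsum_ml3Term (γ ρ δ z : ℝ) : ml3 γ ρ δ z = ∑' j, ml3Term γ ρ δ z j := rfl

lemma abs_ml3Term_le {γ ρ δ z w : ℝ} (hzw : |z| ≤ |w|) (j : ℕ) :
    |ml3Term γ ρ δ z j| ≤ |ml3Term γ ρ δ w j| := by
  simp only [ml3Term, abs_div, abs_mul, abs_pow]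
  gcongr

lemma ml3Term_one_one_succ (γ z : ℝ) {j : ℕ} (hj : γ + j ≠ 0) :
    ml3Term γ 1 1 z (j + 1) = (γ + j) * z / ((j : ℝ) + 1) ^ 2 * ml3Term γ 1 1 z j := by
  simp only [ml3Term, one_mul, Nat.cast_succ, Nat.factorial_succ, Nat.cast_mul, ← add_assoc,
    Real.Gamma_add_one hj, Real.Gamma_add_one (Nat.cast_add_one_ne_zero j),
    Real.Gamma_nat_eq_factorial]
  field_simp
  ring

lemma summable_abs_ml3Term_one_one (γ z : ℝ) : Summable fun j => |ml3Term γ 1 1 z j| := by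
  refine summable_of_ratio_norm_eventually_le (r := 1 / 2) (by norm_num) ?_
  obtain ⟨N, hN⟩ := exists_nat_ge (|γ| + 4 * |z| + 1)
  filter_upwards [Filter.eventually_ge_atTop N] with j hj
  have hjN : (N : ℝ) ≤ j := by exact_mod_cast hj
  have hγj : 0 < γ + j := by linarith [neg_abs_le γ, abs_nonneg z]
  have hratio : |(γ + j) * z / ((j : ℝ) + 1) ^ 2| ≤ 1 / 2 := by
    rw [abs_div, abs_mul, abs_of_pos hγj, abs_of_pos (by positivity : (0 : ℝ) < ((j : ℝ) + 1) ^ 2),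
      div_le_iff₀ (by positivity)]
    have h1 : γ + j ≤ 2 * ((j : ℝ) + 1) := by linarith [le_abs_self γ, abs_nonneg z]
    have h2 : 4 * |z| ≤ (j : ℝ) + 1 := by linarith [abs_nonneg γ]
    nlinarith [mul_le_mul h1 h2 (by positivity) (by positivity)]
  simp only [Real.norm_eq_abs, abs_abs, ml3Term_one_one_succ γ z hγj.ne', abs_mul]
  exact mul_le_mul_of_nonneg_right hratio (abs_nonneg _)

lemma hasDerivAt_mul_ml3Term_one_two (γ a y : ℝ) (j : ℕ) :
    HasDerivAt (fun x => x * ml3Term γ 1 2 (a * x) j) (ml3Term γ 1 1 (a * y) j) y := by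
  have hfun : (fun x => x * ml3Term γ 1 2 (a * x) j) = fun x =>
      Real.Gamma (γ + j) / Real.Gamma γ * a ^ j / (j.factorial * (j + 1).factorial) *
        x ^ (j + 1) := by
    funext x
    rw [ml3Term, one_mul, show (j : ℝ) + 2 = (j + 1 : ℕ) + 1 by push_cast; ring,
      Real.Gamma_nat_eq_factorial]
    ring
  rw [hfun]
  refine ((hasDerivAt_pow (j + 1) y).const_mul _).congr_deriv ?_
  simp only [ml3Term, one_mul, Real.Gamma_nat_eq_factorial, Nat.factorial_succ, Nat.cast_mul,
    Nat.cast_succ, Nat.add_sub_cancel]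
  field_simp
  ring

lemma hasDerivAt_mul_ml3_one_two (γ a z : ℝ) :
    HasDerivAt (fun y => y * ml3 γ 1 2 (a * y)) (ml3 γ 1 1 (a * z)) z := by
  set R := |z| + 1
  have hz : z ∈ Metric.ball (0 : ℝ) R := by simp [R]
  have hbound : ∀ j, ∀ y ∈ Metric.ball (0 : ℝ) R,
      ‖ml3Term γ 1 1 (a * y) j‖ ≤ |ml3Term γ 1 1 (|a| * R) j| := by
    intro j y hy
    refine abs_ml3Term_le ?_ j
    rw [mem_ball_zero_iff, Real.norm_eq_abs] at hy
    rw [abs_mul, abs_mul, abs_abs, abs_of_pos (by positivity : 0 < R)]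
    gcongr
  show HasDerivAt (fun y => y * ∑' j, ml3Term γ 1 2 (a * y) j) (∑' j, ml3Term γ 1 1 (a * z) j) z
  simp only [← tsum_mul_left]
  exact hasDerivAt_tsum_of_isPreconnected (summable_abs_ml3Term_one_one γ _) Metric.isOpen_ball
    (convex_ball 0 R).isPreconnected (fun j y _ => hasDerivAt_mul_ml3Term_one_two γ a y j)
    hbound (Metric.mem_ball_self (by positivity)) (by simp) hz

lemma ml3_one_one_one (z : ℝ) : ml3 1 1 1 z = Real.exp z := by
  rw [Real.exp_eq_exp_ℝ, ← (NormedSpace.expSeries_div_hasSum_exp z).tsum_eq, ml3_eq_tsum_ml3Term]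
  congr 1 with j
  simp only [ml3Term, one_mul, Real.Gamma_one, div_one, add_comm (1 : ℝ),
    Real.Gamma_nat_eq_factorial]
  field_simp

theorem stmt11_general (lam β lam1 : ℝ) (hlam : 0 < lam) (hlam1 : 0 < lam1)
    (phat : ℕ → ℝ → ℝ) (pI : ℕ → ℝ → ℝ)
    (hphat0 : ∀ t : ℝ, phat 0 t = Real.exp (-(β * lam1 * t / (lam1 + lam))))
    (hphatk : ∀ k : ℕ, 1 ≤ k → ∀ t : ℝ,
      phat k t = Real.exp (-(β * t)) *
        (lam1 ^ k * lam * β * t / (lam1 + lam) ^ (k + 1)) *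
        ml3 ((k : ℝ) + 1) 1 2 (lam * β * t / (lam1 + lam)))
    (hpI : ∀ (k : ℕ) (t : ℝ),
      pI k t = Real.exp (-(β * t)) *
        (lam * lam1 ^ k * ((k : ℝ) + 1) / (lam1 + lam) ^ (k + 1)) *
        ml3 ((k : ℝ) + 1) 1 1 (lam * β * t / (lam1 + lam))) :
    ∀ (k : ℕ) (t : ℝ), 0 < t →
      HasDerivAt (phat k)
        (-β * phat k t + β / ((k : ℝ) + 1) * pI k t) t := by
  intro k t _
  have hΛ : lam1 + lam ≠ 0 := by positivity
  have hdecay : HasDerivAt (fun x => Real.exp (-(β * x))) (-β * Real.exp (-(β * t))) t := by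
    simpa [mul_comm] using ((hasDerivAt_id t).const_mul β).neg.exp
  rcases k with _ | k
  · have hphat0_fun :
        phat 0 = fun x => Real.exp (-(β * x)) * Real.exp (lam * β * x / (lam1 + lam)) := by
      funext x
      rw [hphat0, ← Real.exp_add]
      congr 1
      field_simp
      ring
    have hpI0 : pI 0 t = lam / (lam1 + lam) * phat 0 t := by
      rw [hpI, hphat0_fun, Nat.cast_zero, zero_add, ml3_one_one_one]
      ring
    rw [hpI0, hphat0_fun]
    have hgrowth := (((hasDerivAt_id t).const_mul (lam * β)).div_const (lam1 + lam)).exp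
    refine (hdecay.mul hgrowth).congr_deriv ?_
    simp only [id]
    field_simp
    ring
  · have hphat : phat (k + 1) = fun x => Real.exp (-(β * x)) *
        (lam1 ^ (k + 1) * lam * β / (lam1 + lam) ^ (k + 2) *
          (x * ml3 (↑(k + 1) + 1) 1 2 (lam * β / (lam1 + lam) * x))) := by
      funext x
      rw [hphatk (k + 1) k.succ_pos, mul_div_right_comm (lam * β)]
      ring
    rw [hphat, hpI, mul_div_right_comm (lam * β)]
    refine (hdecay.mul ((hasDerivAt_mul_ml3_one_two _ _ t).const_mul _)).congr_deriv ?_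
    field_simp

/-- differential relation between the pmf `p̂_k^E` of the Poisson
process time-changed by a compound Poisson-exponential subordinator with
interchanged parameters `(β, λ)`, and the pmf `p_k^I` of the same Poisson
process time-changed by the inverse compound Poisson-exponential process with
parameters `(λ, β)`. -/
theorem stmt11 (lam β lam1 : ℝ) (hlam : 0 < lam) (hβ : 0 < β) (hlam1 : 0 < lam1)
    (phat : ℕ → ℝ → ℝ) (pI : ℕ → ℝ → ℝ)
    (hphat0 : ∀ t : ℝ, phat 0 t = Real.exp (-(β * lam1 * t / (lam1 + lam))))
    (hphatk : ∀ k : ℕ, 1 ≤ k → ∀ t : ℝ,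
      phat k t = Real.exp (-(β * t)) *
        (lam1 ^ k * lam * β * t / (lam1 + lam) ^ (k + 1)) *
        ml3 ((k : ℝ) + 1) 1 2 (lam * β * t / (lam1 + lam)))
    (hpI : ∀ (k : ℕ) (t : ℝ),
      pI k t = Real.exp (-(β * t)) *
        (lam * lam1 ^ k * ((k : ℝ) + 1) / (lam1 + lam) ^ (k + 1)) *
        ml3 ((k : ℝ) + 1) 1 1 (lam * β * t / (lam1 + lam))) :
    ∀ (k : ℕ) (t : ℝ), 0 < t →
      HasDerivAt (phat k)
        (-β * phat k t + β / ((k : ℝ) + 1) * pI k t) t :=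
  stmt11_general lam β lam1 hlam hlam1 phat pI hphat0 hphatk hpI
end

section
/- Fix reals λ > 0, β > 0, α > 0, λ₁ > 0, t ≥ 0. Define p₀(t) = exp(-λ t (1 - β^α/(λ₁+β)^α)) and, for integers k ≥ 1, p_k(t) = (e^{-λ t}/k!) (λ₁/(λ₁+β))^k Σ_{n=1}^∞ (λ t β^α)^n Γ(α n + k)/((λ₁+β)^{α n} n! Γ(α n)). Then for every real θ with β + λ₁(1 - e^θ) > 0, Σ_{k=0}^∞ e^{θ k} p_k(t) = exp(-λ t (1 - β^α (β + λ₁(1 - e^θ))^{-α})). -/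
open Real MeasureTheory Filter Finset

/-!
Put `a = λ t β^α / (λ₁ + β)^α` and `z = λ₁ e^θ / (λ₁ + β)`; the hypothesis on `θ` says
`|z| < 1`. Then `e^{θk} p_k(t) = e^{-λt} (δ_{k0} + Σ_n a^{n+1}/(n+1)! · Γ(c_n + k)/(k! Γ(c_n)) z^k)`
with `c_n = α (n + 1)`. Summing over `k` first, the negative binomial series
`Σ_k Γ(c + k)/(k! Γ(c)) z^k = (1 - z)^{-c}` turns the `n`-th column into
`(a (1 - z)^{-α})^{n+1}/(n+1)!`, and the sum over `n` is `exp (a (1 - z)^{-α}) - 1`. The double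
series converges absolutely (replace `a`, `z` by `|a|`, `|z|`), which justifies the exchange, and
`a (1 - z)^{-α} = λ t β^α (β + λ₁(1 - e^θ))^{-α}`.
-/

theorem Real.Gamma_add_nat_eq_ascPochhammer_mul {s : ℝ} (hs : 0 < s) (n : ℕ) :
    Gamma (s + n) = (ascPochhammer ℝ n).eval s * Gamma s := by
  induction n with
  | zero => simp
  | succ n ih =>
    rw [Nat.cast_succ, ← add_assoc, Gamma_add_one (by positivity), ih, ascPochhammer_succ_right]
    simp only [Polynomial.eval_mul, Polynomial.eval_add, Polynomial.eval_X,
      Polynomial.eval_natCast]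
    ring

theorem Ring.choose_add_sub_one_eq_eval_ascPochhammer_div {R : Type*} [Field R] [CharZero R]
    (r : R) (n : ℕ) : Ring.choose (r + n - 1) n = (ascPochhammer R n).eval r / n.factorial := by
  rw [← Ring.multichoose_eq, ← Polynomial.ascPochhammer_smeval_eq_eval,
    ← Ring.factorial_nsmul_multichoose_eq_ascPochhammer, nsmul_eq_mul,
    mul_div_cancel_left₀ _ (Nat.cast_ne_zero.mpr n.factorial_ne_zero)]

theorem Real.hasSum_one_sub_rpow_neg {s z : ℝ} (hs : 0 < s) (hz : |z| < 1) :
    HasSum (fun k : ℕ => Gamma (s + k) / (k.factorial * Gamma s) * z ^ k) ((1 - z) ^ (-s)) := by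
  have h := (one_div_one_sub_rpow_hasFPowerSeriesOnBall_zero s).hasSum
    (y := z) (by simpa [enorm_eq_nnnorm, ← NNReal.coe_lt_one] using hz)
  simp only [FormalMultilinearSeries.ofScalars_apply_eq, smul_eq_mul, zero_add,
    Ring.choose_add_sub_one_eq_eval_ascPochhammer_div] at h
  rw [rpow_neg (by linarith [le_abs_self z]), ← one_div]
  simpa only [Real.Gamma_add_nat_eq_ascPochhammer_mul hs,
    mul_div_mul_right _ _ (Gamma_pos_of_pos hs).ne'] using h

theorem Real.hasSum_pow_succ_div_factorial_succ (y : ℝ) :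
    HasSum (fun n : ℕ => y ^ (n + 1) / (n + 1).factorial) (exp y - 1) := by
  rw [hasSum_nat_add_iff (f := fun n : ℕ => y ^ n / n.factorial) 1, exp_eq_exp_ℝ]
  simpa using NormedSpace.expSeries_div_hasSum_exp y

noncomputable def negBinomialExpTerm (α a z : ℝ) (n k : ℕ) : ℝ :=
  a ^ (n + 1) / (n + 1).factorial *
    (Gamma (α * ((n : ℝ) + 1) + k) / (k.factorial * Gamma (α * ((n : ℝ) + 1))) * z ^ k)

section negBinomialExpTerm

variable {α : ℝ} (hα : 0 < α) (a : ℝ) {z : ℝ}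
include hα

theorem negBinomialExpTerm_zero_right (n : ℕ) :
    negBinomialExpTerm α a z n 0 = a ^ (n + 1) / (n + 1).factorial := by
  have : Gamma (α * ((n : ℝ) + 1)) ≠ 0 := (Gamma_pos_of_pos (by positivity)).ne'
  simp [negBinomialExpTerm, this]

theorem abs_negBinomialExpTerm (n k : ℕ) :
    |negBinomialExpTerm α a z n k| = negBinomialExpTerm α |a| |z| n k := by
  have h₁ := Gamma_pos_of_pos (show 0 < α * ((n : ℝ) + 1) by positivity)
  have h₂ := Gamma_pos_of_pos (show 0 < α * ((n : ℝ) + 1) + k by positivity)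
  simp only [negBinomialExpTerm, abs_mul, abs_div, abs_pow, Nat.abs_cast, abs_of_pos h₁,
    abs_of_pos h₂]

theorem hasSum_negBinomialExpTerm_right (hz : |z| < 1) (n : ℕ) :
    HasSum (fun k => negBinomialExpTerm α a z n k)
      ((a * (1 - z) ^ (-α)) ^ (n + 1) / (n + 1).factorial) := by
  have hz' : 0 ≤ 1 - z := by linarith [le_abs_self z]
  have h := (Real.hasSum_one_sub_rpow_neg (show 0 < α * ((n : ℝ) + 1) by positivity)
    hz).mul_left (a ^ (n + 1) / (n + 1).factorial)
  have hpow : (1 - z) ^ (-(α * ((n : ℝ) + 1))) = ((1 - z) ^ (-α)) ^ (n + 1) := by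
    rw [← rpow_natCast, ← rpow_mul hz']
    push_cast
    ring_nf
  rw [hpow] at h
  rwa [mul_pow, mul_div_right_comm]

theorem summable_negBinomialExpTerm (hz : |z| < 1) :
    Summable (fun q : ℕ × ℕ => negBinomialExpTerm α a z q.1 q.2) := by
  refine Summable.of_abs ?_
  simp only [abs_negBinomialExpTerm hα]
  have hz' : |(|z|)| < 1 := by rwa [abs_abs]
  refine (summable_prod_of_nonneg fun q => ?_).mpr
    ⟨fun n => (hasSum_negBinomialExpTerm_right hα |a| hz' n).summable, ?_⟩
  · exact (abs_nonneg _).trans (abs_negBinomialExpTerm hα a (z := z) q.1 q.2).le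
  · simp only [(hasSum_negBinomialExpTerm_right hα |a| hz' _).tsum_eq]
    exact (hasSum_pow_succ_div_factorial_succ _).summable

theorem hasSum_tsum_negBinomialExpTerm (hz : |z| < 1) :
    HasSum (fun k => ∑' n, negBinomialExpTerm α a z n k) (exp (a * (1 - z) ^ (-α)) - 1) := by
  have hS := summable_negBinomialExpTerm hα a hz
  have hsum : HasSum (fun q : ℕ × ℕ => negBinomialExpTerm α a z q.1 q.2)
      (exp (a * (1 - z) ^ (-α)) - 1) := by
    rw [(hasSum_pow_succ_div_factorial_succ _).unique
      (hS.hasSum.prod_fiberwise (hasSum_negBinomialExpTerm_right hα a hz))]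
    exact hS.hasSum
  exact ((Equiv.prodComm ℕ ℕ).hasSum_iff.mpr hsum).prod_fiberwise
    fun k => (hS.prod_symm.prod_factor k).hasSum

end negBinomialExpTerm

theorem exp_mul_tsum_eq_tsum_negBinomialExpTerm {α D : ℝ} (hD : 0 < D) (C c x θ : ℝ)
    (k : ℕ) :
    exp (θ * k) * (C / k.factorial * (x / D) ^ k *
      ∑' n : ℕ, c ^ (n + 1) * Gamma (α * ((n : ℝ) + 1) + k) /
        (D ^ (α * ((n : ℝ) + 1)) * (n + 1).factorial * Gamma (α * ((n : ℝ) + 1)))) =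
      C * ∑' n, negBinomialExpTerm α (c / D ^ α) (x * exp θ / D) n k := by
  rw [← tsum_mul_left, ← tsum_mul_left, ← tsum_mul_left]
  congr 1 with n
  have hpow : D ^ (α * ((n : ℝ) + 1)) = (D ^ α) ^ (n + 1) := by
    rw [rpow_mul hD.le]
    norm_cast
  rw [hpow, mul_comm θ, exp_nat_mul, negBinomialExpTerm]
  ring

theorem stmt12_general (lam β α lam1 t : ℝ) (hα : 0 < α)
    (hlam1 : 0 < lam1) (p : ℕ → ℝ → ℝ)
    (hp0 : ∀ s : ℝ, p 0 s = Real.exp (-(lam * s) * (1 - β ^ α / (lam1 + β) ^ α)))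
    (hpk : ∀ k : ℕ, 1 ≤ k → ∀ s : ℝ,
      p k s = (Real.exp (-(lam * s)) / (Nat.factorial k : ℝ)) *
        (lam1 / (lam1 + β)) ^ k *
        ∑' n : ℕ, (lam * s * β ^ α) ^ (n + 1) *
            Real.Gamma (α * ((n : ℝ) + 1) + (k : ℝ)) /
          ((lam1 + β) ^ (α * ((n : ℝ) + 1)) * (Nat.factorial (n + 1) : ℝ) *
            Real.Gamma (α * ((n : ℝ) + 1)))) :
    ∀ θ : ℝ, 0 < β + lam1 * (1 - Real.exp θ) →
      (∑' k : ℕ, Real.exp (θ * (k : ℝ)) * p k t)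
        = Real.exp (-(lam * t) *
            (1 - β ^ α * (β + lam1 * (1 - Real.exp θ)) ^ (-α))) := by
  intro θ hθ
  have hD : 0 < lam1 + β := by nlinarith [exp_pos θ]
  set a := lam * t * β ^ α / (lam1 + β) ^ α with ha
  set z := lam1 * exp θ / (lam1 + β) with hz_def
  have hz : |z| < 1 := by
    rw [abs_lt, lt_div_iff₀ hD, div_lt_one hD]
    constructor <;> nlinarith [exp_pos θ]
  have hterm : ∀ k : ℕ, exp (θ * k) * p k t =
      exp (-(lam * t)) * ((if k = 0 then 1 else 0) + ∑' n, negBinomialExpTerm α a z n k) := by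
    rintro (_ | k)
    · simp only [CharP.cast_eq_zero, mul_zero, exp_zero, one_mul, hp0, if_pos,
        negBinomialExpTerm_zero_right hα, (hasSum_pow_succ_div_factorial_succ a).tsum_eq]
      rw [add_sub_cancel, ← exp_add, ha]
      ring_nf
    · rw [hpk _ k.succ_pos, exp_mul_tsum_eq_tsum_negBinomialExpTerm hD, if_neg k.succ_ne_zero,
        zero_add]
  have hsum := ((hasSum_ite_eq 0 1).add
    (hasSum_tsum_negBinomialExpTerm hα a hz)).mul_left (exp (-(lam * t)))
  rw [tsum_congr hterm, hsum.tsum_eq, add_sub_cancel, ← exp_add]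
  congr 1
  have h1z : 1 - z = (β + lam1 * (1 - exp θ)) / (lam1 + β) := by
    rw [hz_def]
    field_simp
    ring
  rw [h1z, div_rpow hθ.le hD.le, rpow_neg hD.le, rpow_neg hθ.le, ha]
  field_simp
  ring

/-- moment generating function of a Poisson process time-changed
by a compound Poisson–Gamma subordinator. -/
theorem stmt12 (lam β α lam1 t : ℝ) (hlam : 0 < lam) (hβ : 0 < β) (hα : 0 < α)
    (hlam1 : 0 < lam1) (ht : 0 ≤ t) (p : ℕ → ℝ → ℝ)
    (hp0 : ∀ s : ℝ, p 0 s = Real.exp (-(lam * s) * (1 - β ^ α / (lam1 + β) ^ α)))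
    (hpk : ∀ k : ℕ, 1 ≤ k → ∀ s : ℝ,
      p k s = (Real.exp (-(lam * s)) / (Nat.factorial k : ℝ)) *
        (lam1 / (lam1 + β)) ^ k *
        ∑' n : ℕ, (lam * s * β ^ α) ^ (n + 1) *
            Real.Gamma (α * ((n : ℝ) + 1) + (k : ℝ)) /
          ((lam1 + β) ^ (α * ((n : ℝ) + 1)) * (Nat.factorial (n + 1) : ℝ) *
            Real.Gamma (α * ((n : ℝ) + 1)))) :
    ∀ θ : ℝ, 0 < β + lam1 * (1 - Real.exp θ) →
      (∑' k : ℕ, Real.exp (θ * (k : ℝ)) * p k t)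
        = Real.exp (-(lam * t) *
            (1 - β ^ α * (β + lam1 * (1 - Real.exp θ)) ^ (-α))) :=
  stmt12_general lam β α lam1 t hα hlam1 p hp0 hpk
end

section
/- Fix reals β > 0, λ₁ > 0 and let λ = β. Define p₀^E(t) = exp(-β λ₁ t/(λ₁+β)), p_k^E(t) = e^{-β t}(λ₁^k β² t/(λ₁+β)^{k+1}) E^{k+1}_{1,2}(β² t/(λ₁+β)) for k ≥ 1, and p_k^I(t) = e^{-β t}(β λ₁^k (k+1)/(λ₁+β)^{k+1}) E^{k+1}_{1,1}(β² t/(λ₁+β)) for k ≥ 0. Then for every integer k ≥ 0 and every t ≥ 0, p_k^I(t) = (k+1)·(β/(λ₁+β))·[ p_k^E(t) + Σ_{m=1}^{k} (λ₁/(λ₁+β))^m p_{k-m}^E(t) ], where the sum is empty for k = 0. -/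
/-
With `x = β²t/(λ₁+β)` and `q = λ₁/(λ₁+β)`, both sides equal `e^{-βt} q^k` times a function of `x`.
At `γ = k + 1` the Gamma ratio in `E^γ_{1,δ}` is a binomial coefficient:
`E^{k+1}_{1,1}(x) = Σ_j C(k+j, j) x^j / j!` and `E^{k+1}_{1,2}(x) = Σ_j C(k+j, j) x^j / (j+1)!`.
Pascal's rule then gives `E^{k+2}_{1,1} = E^{k+1}_{1,1} + x E^{k+2}_{1,2}`, and telescoping from
`E^1_{1,1} = exp` yields `E^{k+1}_{1,1}(x) = e^x + x Σ_{i=1}^k E^{i+1}_{1,2}(x)`. Since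
`q^m p^E_{k-m}(t) = e^{-βt} q^k x E^{k-m+1}_{1,2}(x)` for `m < k` and `q^k p^E_0(t) = e^{-βt} q^k e^x`,
this is the claim.
-/

open Real MeasureTheory Filter Finset

open scoped Nat

lemma summable_choose_mul_pow_div_factorial (k d : ℕ) (z : ℝ) :
    Summable fun j : ℕ => ((k + j).choose j : ℝ) * z ^ j / (j + d)! := by
  refine Summable.of_norm_bounded
    ((Real.summable_pow_div_factorial (2 * |z|)).mul_left (2 ^ k)) fun j => ?_
  have hchoose : ((k + j).choose j : ℝ) ≤ 2 ^ k * 2 ^ j := by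
    rw [← pow_add]; exact_mod_cast Nat.choose_le_two_pow _ _
  have hfact : (j ! : ℝ) ≤ (j + d)! := by exact_mod_cast Nat.factorial_le (Nat.le_add_right j d)
  rw [norm_div, norm_mul, norm_pow, Real.norm_natCast, Real.norm_natCast, Real.norm_eq_abs]
  calc ((k + j).choose j : ℝ) * |z| ^ j / (j + d)! ≤ 2 ^ k * 2 ^ j * |z| ^ j / j ! := by
        gcongr
    _ = 2 ^ k * ((2 * |z|) ^ j / j !) := by ring

lemma ml3_natCast_add_one_eq_tsum (k d : ℕ) (z : ℝ) :
    ml3 ((k : ℝ) + 1) 1 ((d : ℝ) + 1) z =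
      ∑' j : ℕ, ((k + j).choose j : ℝ) * z ^ j / (j + d)! := by
  refine tsum_congr fun j => ?_
  have hk : (k ! : ℝ) ≠ 0 := by positivity
  have hj : (j ! : ℝ) ≠ 0 := by positivity
  have hchoose : ((k + j).choose j : ℝ) * k ! * j ! = (k + j)! := by
    exact_mod_cast Nat.add_choose_mul_factorial_mul_factorial k j
  rw [show (k : ℝ) + 1 + j = ((k + j : ℕ) : ℝ) + 1 by push_cast; ring,
    show (1 : ℝ) * j + (d + 1) = ((j + d : ℕ) : ℝ) + 1 by push_cast; ring,
    Real.Gamma_nat_eq_factorial, Real.Gamma_nat_eq_factorial, Real.Gamma_nat_eq_factorial,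
    ← hchoose]
  field_simp

lemma ml3_natCast_add_one_one_one_eq_tsum (k : ℕ) (z : ℝ) :
    ml3 ((k : ℝ) + 1) 1 1 z = ∑' j : ℕ, ((k + j).choose j : ℝ) * z ^ j / j ! := by
  simpa using ml3_natCast_add_one_eq_tsum k 0 z

lemma ml3_natCast_add_one_one_two_eq_tsum (k : ℕ) (z : ℝ) :
    ml3 ((k : ℝ) + 1) 1 2 z = ∑' j : ℕ, ((k + j).choose j : ℝ) * z ^ j / (j + 1)! := by
  simpa [one_add_one_eq_two] using ml3_natCast_add_one_eq_tsum k 1 z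

lemma ml3_natCast_add_one_one_one_succ (k : ℕ) (z : ℝ) :
    ml3 ((k + 1 : ℕ) + 1) 1 1 z =
      ml3 ((k : ℝ) + 1) 1 1 z + z * ml3 ((k + 1 : ℕ) + 1) 1 2 z := by
  have hpascal : ∀ j : ℕ,
      ((k + 1 + (j + 1)).choose (j + 1) : ℝ) * z ^ (j + 1) / (j + 1)! =
        ((k + (j + 1)).choose (j + 1) : ℝ) * z ^ (j + 1) / (j + 1)! +
          z * (((k + 1 + j).choose j : ℝ) * z ^ j / (j + 1)!) := by
    intro j
    rw [show k + 1 + (j + 1) = k + 1 + j + 1 by ring, show k + (j + 1) = k + 1 + j by ring,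
      Nat.choose_succ_succ, Nat.cast_add, pow_succ]
    ring
  have hsummable (n : ℕ) : Summable fun j : ℕ => ((n + j).choose j : ℝ) * z ^ j / j ! := by
    simpa using summable_choose_mul_pow_div_factorial n 0 z
  rw [ml3_natCast_add_one_one_one_eq_tsum, ml3_natCast_add_one_one_one_eq_tsum,
    ml3_natCast_add_one_one_two_eq_tsum, (hsummable (k + 1)).tsum_eq_zero_add,
    (hsummable k).tsum_eq_zero_add, tsum_congr hpascal,
    ((summable_nat_add_iff 1).mpr (hsummable k)).tsum_add
      ((summable_choose_mul_pow_div_factorial (k + 1) 1 z).mul_left z), tsum_mul_left]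
  simp only [Nat.choose_zero_right]
  ring

lemma ml3_natCast_add_one_one_one_eq_exp_add (k : ℕ) (z : ℝ) :
    ml3 ((k : ℝ) + 1) 1 1 z = exp z + z * ∑ i ∈ range k, ml3 ((i + 1 : ℕ) + 1) 1 2 z := by
  induction k with
  | zero =>
    rw [ml3_natCast_add_one_one_one_eq_tsum, Real.exp_eq_exp_ℝ, NormedSpace.exp_eq_tsum_div]
    simp
  | succ k ih => rw [ml3_natCast_add_one_one_one_succ, ih, sum_range_succ]; ring

lemma add_sum_Icc_pow_mul_sub_eq {R : Type*} [Semiring R] (q : R) (p : ℕ → R) (k : ℕ) :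
    p k + ∑ m ∈ Icc 1 k, q ^ m * p (k - m) = ∑ j ∈ range (k + 1), q ^ (k - j) * p j := by
  rw [← zero_add 1, Icc_add_one_left_eq_Ioc, ← sum_range_reflect, Nat.range_succ_eq_Icc_zero,
    ← add_sum_Ioc_eq_sum_Icc (Nat.zero_le k)]
  refine congrArg₂ (· + ·) (by simp) (sum_congr rfl fun j hj => ?_)
  rw [mem_Ioc] at hj
  rw [Nat.add_sub_cancel, Nat.sub_sub_self hj.2]

/-- recursion expressing the pmf `p_k^I` (Poisson process
time-changed by the inverse process) via the pmf `p_k^E` (Poisson process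
time-changed by the direct compound Poisson-exponential process), in the case
`λ = β`. -/
theorem stmt13 (β lam1 : ℝ) (hβ : 0 < β) (hlam1 : 0 < lam1)
    (pE : ℕ → ℝ → ℝ) (pI : ℕ → ℝ → ℝ)
    (hpE0 : ∀ t : ℝ, pE 0 t = Real.exp (-(β * lam1 * t / (lam1 + β))))
    (hpEk : ∀ k : ℕ, 1 ≤ k → ∀ t : ℝ,
      pE k t = Real.exp (-(β * t)) *
        (lam1 ^ k * β ^ 2 * t / (lam1 + β) ^ (k + 1)) *
        ml3 ((k : ℝ) + 1) 1 2 (β ^ 2 * t / (lam1 + β)))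
    (hpI : ∀ (k : ℕ) (t : ℝ),
      pI k t = Real.exp (-(β * t)) *
        (β * lam1 ^ k * ((k : ℝ) + 1) / (lam1 + β) ^ (k + 1)) *
        ml3 ((k : ℝ) + 1) 1 1 (β ^ 2 * t / (lam1 + β))) :
    ∀ (k : ℕ) (t : ℝ), 0 ≤ t →
      pI k t = ((k : ℝ) + 1) * (β / (lam1 + β)) *
        (pE k t + ∑ m ∈ Finset.Icc 1 k, (lam1 / (lam1 + β)) ^ m * pE (k - m) t) := by
  intro k t _
  have hs : lam1 + β ≠ 0 := by positivity
  set q := lam1 / (lam1 + β)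
  set x := β ^ 2 * t / (lam1 + β)
  have hpE_zero : pE 0 t = exp (-(β * t)) * exp x := by
    rw [hpE0, ← exp_add]; congr 1; simp only [x]; field_simp; ring
  have hpE_succ : ∀ j, pE (j + 1) t =
      exp (-(β * t)) * q ^ (j + 1) * (x * ml3 ((j + 1 : ℕ) + 1) 1 2 x) := by
    intro j; rw [hpEk (j + 1) j.succ_pos]; simp only [q, x, div_pow]; field_simp; ring
  have hweighted : ∀ j ∈ range k, q ^ (k - (j + 1)) * pE (j + 1) t =
      exp (-(β * t)) * q ^ k * (x * ml3 ((j + 1 : ℕ) + 1) 1 2 x) := by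
    intro j hj
    have hjk : j + 1 ≤ k := mem_range.mp hj
    rw [hpE_succ, ← pow_sub_mul_pow q hjk]; ring
  rw [hpI, add_sum_Icc_pow_mul_sub_eq q (pE · t), sum_range_succ', sum_congr rfl hweighted, ← mul_sum,
    ← mul_sum, Nat.sub_zero, hpE_zero, ml3_natCast_add_one_one_one_eq_exp_add]
  simp only [q, x, div_pow]
  field_simp
  ring
end

section
/- For every integer n ≥ 1 and every real x ≥ 0, e^{-x} Σ_{k=1}^{n} x^{k-1} E^{2}_{n,k}(x^n) = x/n + (e^{-x}/n) Σ_{k=1}^{n} (n - k + 1) x^{k-1} E_{n,k}(x^n). (With x = β t, both sides multiplied by 1/λ give two expressions for the mean of the inverse compound Poisson–Erlang process Y^{(n)}(t).) -/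
/-!
Write `a m = x ^ m / m!` and split `m = n j + r` with `0 ≤ r < n`. Since `Γ(2 + j) / Γ(2) = (j + 1)!`
and `Γ(n j + k) = (n j + k - 1)!`, the two sums over `k` are the series `∑ (⌊m / n⌋ + 1) a m` and
`∑ (n - m % n) a m`. Their coefficients satisfy `n (⌊m / n⌋ + 1) = m + (n - m % n)`, and
`∑ m a m = x eˣ`.
-/

open Real MeasureTheory Filter Finset

open Nat

theorem hasSum_natCast_mul_pow_div_factorial (x : ℝ) :
    HasSum (fun m : ℕ => (m : ℝ) * x ^ m / m !) (x * exp x) := by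
  have hshift : (fun m : ℕ => ((m + 1 : ℕ) : ℝ) * x ^ (m + 1) / (m + 1)!) =
      fun m => x * (x ^ m / m !) := by
    ext m
    rw [factorial_succ]
    push_cast
    field_simp
    ring
  have hexp := (NormedSpace.expSeries_div_hasSum_exp x).mul_left x
  rw [← Real.exp_eq_exp_ℝ, ← hshift] at hexp
  rwa [← hasSum_nat_add_iff' 1, sum_range_one, CharP.cast_eq_zero, zero_mul, zero_div, sub_zero]

theorem sum_range_tsum_eq_tsum_div_mod {R : Type*} [AddCommGroup R] [UniformSpace R]
    [IsUniformAddGroup R] [CompleteSpace R] [T0Space R] {n : ℕ} [NeZero n] {F : ℕ → ℕ → R}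
    (hF : Summable fun m => F (m / n) (m % n)) :
    ∑ r ∈ range n, ∑' j, F j r = ∑' m, F (m / n) (m % n) := by
  let e : Fin n × ℕ ≃ ℕ := (Equiv.prodComm _ _).trans (Nat.divModEquiv n).symm
  have he : Summable fun p => F (e p / n) (e p % n) := hF.comp_injective e.injective
  rw [← e.tsum_eq, he.tsum_prod' fun r => he.comp_injective (Prod.mk_right_injective r),
    tsum_fintype, ← Fin.sum_univ_eq_sum_range]
  refine sum_congr rfl fun r _ => tsum_congr fun j => ?_
  have hdiv : (j * n + r) / n = j := by
    rw [add_comm, Nat.add_mul_div_right _ _ (NeZero.pos n), Nat.div_eq_of_lt r.2, zero_add]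
  simp [e, hdiv, Nat.mod_eq_of_lt r.2]

theorem sum_Icc_one_eq_sum_range_succ {M : Type*} [AddCommMonoid M] (f : ℕ → M) (n : ℕ) :
    ∑ k ∈ Icc 1 n, f k = ∑ r ∈ range n, f (r + 1) := by
  rw [← Ico_add_one_right_eq_Icc, sum_Ico_eq_sum_range, Nat.add_sub_cancel]
  simp_rw [add_comm 1]

theorem Gamma_natCast_mul_add_natCast (n j k : ℕ) (hk : 1 ≤ k) :
    Gamma (n * j + k) = (n * j + (k - 1))! := by
  rw [← Real.Gamma_nat_eq_factorial]
  push_cast [hk]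
  ring_nf

theorem pow_mul_ml2 (n k : ℕ) (hk : 1 ≤ k) (x : ℝ) :
    x ^ (k - 1) * ml2 n k (x ^ n) = ∑' j : ℕ, x ^ (n * j + (k - 1)) / (n * j + (k - 1))! := by
  rw [ml2, ← tsum_mul_left]
  refine tsum_congr fun j => ?_
  rw [Gamma_natCast_mul_add_natCast n j k hk, pow_add, pow_mul]
  ring

theorem pow_mul_ml3_two (n k : ℕ) (hk : 1 ≤ k) (x : ℝ) :
    x ^ (k - 1) * ml3 2 n k (x ^ n) =
      ∑' j : ℕ, (j + 1) * (x ^ (n * j + (k - 1)) / (n * j + (k - 1))!) := by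
  rw [ml3, ← tsum_mul_left]
  refine tsum_congr fun j => ?_
  have hGamma : Gamma (2 + j) = (j + 1 : ℝ) * j ! := by
    rw [show (2 + j : ℝ) = (j + 1 : ℕ) + 1 by push_cast; ring, Real.Gamma_nat_eq_factorial,
      factorial_succ]
    push_cast
    ring
  rw [Gamma_natCast_mul_add_natCast n j k hk, hGamma, Real.Gamma_two, pow_add, pow_mul]
  field_simp

section ResidueSplitting

variable (n : ℕ) [NeZero n] (x : ℝ)

theorem summable_sub_mod_mul_pow_div_factorial :
    Summable fun m : ℕ => ((n : ℝ) - (m % n : ℕ)) * (x ^ m / m !) := by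
  refine .of_norm_bounded ((Real.summable_pow_div_factorial |x|).mul_left (n : ℝ)) fun m => ?_
  have hrem : ((m % n : ℕ) : ℝ) ≤ n := by exact_mod_cast (Nat.mod_lt m (NeZero.pos n)).le
  rw [norm_mul, Real.norm_of_nonneg (by linarith), norm_div, norm_pow, Real.norm_eq_abs,
    RCLike.norm_natCast]
  gcongr
  linarith [(m % n).cast_nonneg (α := ℝ)]

theorem hasSum_div_add_one_mul_pow_div_factorial :
    HasSum (fun m : ℕ => ((m / n : ℕ) + 1 : ℝ) * (x ^ m / m !))
      ((x * exp x + ∑' m : ℕ, ((n : ℝ) - (m % n : ℕ)) * (x ^ m / m !)) / n) := by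
  have hdivmod (m : ℕ) : (n : ℝ) * ((m / n : ℕ) + 1) = m + (n - (m % n : ℕ)) := by
    have := congrArg (Nat.cast (R := ℝ)) (Nat.div_add_mod m n)
    push_cast at this
    linarith
  have hsplit : (fun m : ℕ => ((m / n : ℕ) + 1 : ℝ) * (x ^ m / m !)) =
      fun m : ℕ => ((m : ℝ) * x ^ m / m ! + ((n : ℝ) - (m % n : ℕ)) * (x ^ m / m !)) / n := by
    ext m
    rw [eq_div_iff (NeZero.ne _), mul_comm, ← mul_assoc, hdivmod]
    ring
  rw [hsplit]
  exact ((hasSum_natCast_mul_pow_div_factorial x).add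
    (summable_sub_mod_mul_pow_div_factorial n x).hasSum).div_const _

theorem sum_Icc_pow_mul_ml3_two :
    ∑ k ∈ Icc 1 n, x ^ (k - 1) * ml3 2 n k (x ^ n) =
      ∑' m : ℕ, ((m / n : ℕ) + 1 : ℝ) * (x ^ m / m !) := by
  rw [sum_Icc_one_eq_sum_range_succ]
  simp_rw [pow_mul_ml3_two n _ le_add_self x, Nat.add_sub_cancel]
  rw [sum_range_tsum_eq_tsum_div_mod
    (F := fun j r => ((j : ℝ) + 1) * (x ^ (n * j + r) / (n * j + r)!))]
  · simp only [Nat.div_add_mod]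
  · simpa only [Nat.div_add_mod] using (hasSum_div_add_one_mul_pow_div_factorial n x).summable

theorem sum_Icc_mul_pow_mul_ml2 :
    ∑ k ∈ Icc 1 n, ((n : ℝ) - k + 1) * x ^ (k - 1) * ml2 n k (x ^ n) =
      ∑' m : ℕ, ((n : ℝ) - (m % n : ℕ)) * (x ^ m / m !) := by
  have hcoef (r : ℕ) : (n : ℝ) - (r + 1 : ℕ) + 1 = n - r := by push_cast; ring
  rw [sum_Icc_one_eq_sum_range_succ]
  simp_rw [mul_assoc _ (x ^ _), pow_mul_ml2 n _ le_add_self x, Nat.add_sub_cancel, hcoef,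
    ← tsum_mul_left]
  rw [sum_range_tsum_eq_tsum_div_mod
    (F := fun j r => ((n : ℝ) - r) * (x ^ (n * j + r) / (n * j + r)!))]
  · simp only [Nat.div_add_mod]
  · simpa only [Nat.div_add_mod] using summable_sub_mod_mul_pow_div_factorial n x

end ResidueSplitting

theorem stmt18_general (n : ℕ) (hn : 1 ≤ n) (x : ℝ) :
    Real.exp (-x) *
      (∑ k ∈ Finset.Icc 1 n, x ^ (k - 1) * ml3 2 (n : ℝ) (k : ℝ) (x ^ n))
    = x / (n : ℝ) +
      Real.exp (-x) / (n : ℝ) *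
        ∑ k ∈ Finset.Icc 1 n,
          ((n : ℝ) - (k : ℝ) + 1) * x ^ (k - 1) * ml2 (n : ℝ) (k : ℝ) (x ^ n) := by
  have : NeZero n := ⟨by omega⟩
  rw [sum_Icc_pow_mul_ml3_two, sum_Icc_mul_pow_mul_ml2,
    (hasSum_div_add_one_mul_pow_div_factorial n x).tsum_eq, exp_neg]
  field_simp

/-- two expressions for (λ times) the mean of the inverse
compound Poisson–Erlang process, at `x = β t`. -/
theorem stmt18 (n : ℕ) (hn : 1 ≤ n) (x : ℝ) (hx : 0 ≤ x) :
    Real.exp (-x) *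
      (∑ k ∈ Finset.Icc 1 n, x ^ (k - 1) * ml3 2 (n : ℝ) (k : ℝ) (x ^ n))
    = x / (n : ℝ) +
      Real.exp (-x) / (n : ℝ) *
        ∑ k ∈ Finset.Icc 1 n,
          ((n : ℝ) - (k : ℝ) + 1) * x ^ (k - 1) * ml2 (n : ℝ) (k : ℝ) (x ^ n) :=
  stmt18_general n hn x
end

section
/- For every integer n ≥ 1, the function x ↦ e^{-x} Σ_{k=1}^{n} (n - k + 1) x^{k-1} E_{n,k}(x^n) tends to (n+1)/2 as x → ∞. Consequently, the mean of the inverse compound Poisson–Erlang process satisfies E[Y^{(n)}(t)] - β t/(n λ) → (n+1)/(2 n λ) as t → ∞. -/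
open Real MeasureTheory Filter Finset

/-!
Split the series by residues mod `n`: `x^(k-1) E_{n,k}(x^n)` collects the terms `x^m/m!` with
`m ≡ k - 1 (mod n)`, so the sum is `Σ_m a(m) x^m/m!` with the `n`-periodic coefficient
`a(m) = n - (m mod n)`. Fourier inversion on `ZMod n` writes `a(m) = n⁻¹ Σ_j â(j) ζ_j^m` with
`ζ_j = e^{2πij/n}`, hence the series equals `n⁻¹ Σ_j â(j) e^{ζ_j x}`. After multiplying by `e^{-x}`,
every term with `j ≠ 0` decays like `e^{(Re ζ_j - 1) x}`, leaving `n⁻¹ â(0)`, the mean of `a`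
over a period, which is `(n + 1)/2`.
-/

open Nat ZMod

lemma Complex.re_lt_one_of_norm_eq_one {z : ℂ} (hz : ‖z‖ = 1) (h1 : z ≠ 1) : z.re < 1 := by
  have hsq : Complex.normSq (z - 1) = 2 - 2 * z.re := by
    rw [Complex.normSq_sub, Complex.normSq_eq_norm_sq, hz]
    simp only [one_pow, map_one, mul_one, sub_left_inj]
    ring
  have hpos : 0 < Complex.normSq (z - 1) := Complex.normSq_pos.mpr (sub_ne_zero.mpr h1)
  linarith

lemma Complex.tendsto_exp_mul_ofReal_nhds_zero {z : ℂ} (hz : z.re < 0) :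
    Tendsto (fun x : ℝ => Complex.exp (z * x)) atTop (nhds 0) := by
  rw [Complex.tendsto_exp_nhds_zero_iff]
  simpa [mul_comm] using tendsto_id.atTop_mul_const_of_neg hz

lemma Finset.sum_range_natCast_sub (n : ℕ) : ∑ i ∈ range n, ((n : ℝ) - i) = n * (n + 1) / 2 := by
  induction n with
  | zero => simp
  | succ n ih =>
    rw [sum_range_succ]
    simp only [Nat.cast_succ, add_sub_right_comm _ (1 : ℝ), sum_add_distrib, ih]
    simp only [sum_const, card_range, nsmul_eq_mul, mul_one, sub_self, zero_add]
    ring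

lemma Nat.mul_add_const_injective (n : ℕ) [NeZero n] (i : ℕ) :
    Function.Injective fun j : ℕ => j * n + i := fun _ _ h =>
  Nat.eq_of_mul_eq_mul_right (Nat.pos_of_neZero n) (Nat.add_right_cancel h)

section
variable {n : ℕ} [NeZero n]

lemma hasSum_pow_div_factorial_mul_ml2 (i : ℕ) (x : ℝ) :
    HasSum (fun j : ℕ => x ^ (j * n + i) / (j * n + i)!) (x ^ i * ml2 n (i + 1) (x ^ n)) := by
  suffices h : x ^ i * ml2 n (i + 1) (x ^ n) = ∑' j : ℕ, x ^ (j * n + i) / (j * n + i)! by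
    rw [h]
    exact ((Real.summable_pow_div_factorial x).comp_injective (mul_add_const_injective n i)).hasSum
  rw [ml2, ← tsum_mul_left]
  refine tsum_congr fun j => ?_
  have hΓ : Real.Gamma (n * j + (i + 1)) = (j * n + i)! := by
    rw [← Real.Gamma_nat_eq_factorial]; push_cast; ring_nf
  rw [hΓ, ← pow_mul, ← mul_div_assoc, ← pow_add, mul_comm n j, add_comm i]

lemma hasSum_mod_mul_pow_div_factorial (c : ℕ → ℝ) (x : ℝ) :
    HasSum (fun m : ℕ => c (m % n) * x ^ m / m !)
      (∑ i ∈ range n, c i * (x ^ i * ml2 n (i + 1) (x ^ n))) := by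
  have hfiber : ∀ i ∈ range n, HasSum (fun m : ℕ => if m % n = i then c i * (x ^ m / m !) else 0)
      (c i * (x ^ i * ml2 n (i + 1) (x ^ n))) := by
    intro i hi
    rw [← (mul_add_const_injective n i).hasSum_iff]
    · refine ((hasSum_pow_div_factorial_mul_ml2 i x).mul_left (c i)).congr_fun fun j => ?_
      simp [Nat.mul_add_mod_of_lt (mem_range.mp hi)]
    · rintro m hm
      rw [if_neg]
      rintro rfl
      exact hm ⟨m / n, Nat.div_add_mod' m n⟩
  refine (hasSum_sum hfiber).congr_fun fun m => ?_
  rw [sum_ite_eq, if_pos (mem_range.mpr (Nat.mod_lt m (Nat.pos_of_neZero n))), mul_div_assoc]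

lemma ZMod.stdAddChar_re_lt_one {j : ZMod n} (hj : j ≠ 0) : (stdAddChar j).re < 1 := by
  refine Complex.re_lt_one_of_norm_eq_one (by simp [stdAddChar_apply, Circle.norm_coe])
    fun h => hj ?_
  rw [← AddChar.map_zero_eq_one (stdAddChar (N := n))] at h
  exact injective_stdAddChar (N := n) h

lemma ZMod.hasSum_mul_pow_div_factorial (a : ZMod n → ℂ) (z : ℂ) :
    HasSum (fun m : ℕ => a m * z ^ m / m !)
      ((n : ℂ)⁻¹ * ∑ j, 𝓕 a j * Complex.exp (stdAddChar j * z)) := by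
  have hexp : ∀ j, HasSum (fun m : ℕ => 𝓕 a j * ((stdAddChar j * z) ^ m / m !))
      (𝓕 a j * Complex.exp (stdAddChar j * z)) := fun j => by
    have := NormedSpace.expSeries_div_hasSum_exp (𝔸 := ℂ) (stdAddChar j * z)
    rw [← Complex.exp_eq_exp_ℂ] at this
    exact this.mul_left _
  refine ((hasSum_sum fun j _ => hexp j).mul_left _).congr_fun fun m => ?_
  have hinv : a m = (n : ℂ)⁻¹ * ∑ j, stdAddChar j ^ m * 𝓕 a j := by
    conv_lhs => rw [← (dft (N := n) (E := ℂ)).symm_apply_apply a]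
    simp [invDFT_apply, ← AddChar.map_nsmul_eq_pow, nsmul_eq_mul, mul_comm]
  simp only [hinv, mul_sum, sum_mul, sum_div]
  refine sum_congr rfl fun j _ => ?_
  ring

lemma ZMod.tendsto_exp_neg_mul_sum_exp_stdAddChar (F : ZMod n → ℂ) :
    Tendsto (fun x : ℝ => Complex.exp (-x) *
      ((n : ℂ)⁻¹ * ∑ j, F j * Complex.exp (stdAddChar j * x))) atTop (nhds ((n : ℂ)⁻¹ * F 0)) := by
  have hterm : ∀ j, Tendsto (fun x : ℝ => F j * Complex.exp ((stdAddChar j - 1) * x)) atTop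
      (nhds (if j = 0 then F 0 else 0)) := by
    intro j
    by_cases hj : j = 0
    · simp [hj]
    · have hre : (stdAddChar j - 1).re < 0 := by simpa using stdAddChar_re_lt_one hj
      simpa [hj] using (Complex.tendsto_exp_mul_ofReal_nhds_zero hre).const_mul (F j)
  have hsum := (tendsto_finsetSum (univ : Finset (ZMod n)) fun j _ => hterm j).const_mul (n : ℂ)⁻¹
  rw [sum_ite_eq', if_pos (mem_univ 0)] at hsum
  refine hsum.congr fun x => ?_
  simp only [mul_sum]
  refine sum_congr rfl fun j _ => ?_
  rw [show (stdAddChar j - 1) * (x : ℂ) = -x + stdAddChar j * x by ring, Complex.exp_add]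
  ring

lemma ZMod.tendsto_exp_neg_mul_of_hasSum (a : ZMod n → ℝ) {S : ℝ → ℝ}
    (hS : ∀ x, HasSum (fun m : ℕ => a m * x ^ m / m !) (S x)) :
    Tendsto (fun x => rexp (-x) * S x) atTop (nhds ((∑ k, a k) / n)) := by
  set A : ZMod n → ℂ := fun k => a k
  have hSA : ∀ x : ℝ, (S x : ℂ) = (n : ℂ)⁻¹ * ∑ j, 𝓕 A j * Complex.exp (stdAddChar j * x) := by
    intro x
    have h := Complex.hasSum_ofReal.mpr (hS x)
    push_cast at h
    exact h.unique (hasSum_mul_pow_div_factorial A x)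
  have hlim :=
    (Complex.continuous_re.tendsto _).comp (tendsto_exp_neg_mul_sum_exp_stdAddChar (𝓕 A))
  rw [dft_apply_zero, show (n : ℂ)⁻¹ * ∑ k, A k = ((∑ k, a k) / n : ℝ) by push_cast; ring,
    Complex.ofReal_re] at hlim
  refine hlim.congr fun x => ?_
  rw [Function.comp_apply, ← hSA x, ← Complex.ofReal_neg, ← Complex.ofReal_exp,
    ← Complex.ofReal_mul, Complex.ofReal_re]

end

lemma hasSum_natCast_sub_mod_mul_pow_div_factorial (n : ℕ) [NeZero n] (x : ℝ) :
    HasSum (fun m : ℕ => ((n : ℝ) - (m % n : ℕ)) * x ^ m / m !)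
      (∑ k ∈ Icc 1 n, ((n : ℝ) - k + 1) * x ^ (k - 1) * ml2 n k (x ^ n)) := by
  suffices h : ∑ i ∈ range n, ((n : ℝ) - i) * (x ^ i * ml2 n (i + 1) (x ^ n)) =
      ∑ k ∈ Icc 1 n, ((n : ℝ) - k + 1) * x ^ (k - 1) * ml2 n k (x ^ n) from
    h ▸ hasSum_mod_mul_pow_div_factorial (fun i => (n : ℝ) - i) x
  rw [← Ico_add_one_right_eq_Icc, sum_Ico_eq_sum_range, Nat.add_sub_cancel]
  refine sum_congr rfl fun i _ => ?_
  push_cast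
  rw [Nat.add_sub_cancel_left]
  ring_nf

lemma tendsto_exp_neg_mul_sum_ml2 (n : ℕ) [NeZero n] :
    Tendsto (fun x : ℝ => rexp (-x) *
        ∑ k ∈ Icc 1 n, ((n : ℝ) - k + 1) * x ^ (k - 1) * ml2 n k (x ^ n))
      atTop (nhds ((n + 1) / 2)) := by
  have hmean : (∑ k : ZMod n, ((n : ℝ) - k.val)) / n = (n + 1) / 2 := by
    obtain ⟨m, rfl⟩ := Nat.exists_eq_succ_of_ne_zero (NeZero.ne n)
    have hval : ∑ k : ZMod (m + 1), ((m + 1 : ℕ) - k.val : ℝ) =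
        ∑ i ∈ range (m + 1), ((m + 1 : ℕ) - i : ℝ) :=
      Fin.sum_univ_eq_sum_range (fun i => ((m + 1 : ℕ) - i : ℝ)) (m + 1)
    rw [hval, sum_range_natCast_sub]
    field_simp
  rw [← hmean]
  refine ZMod.tendsto_exp_neg_mul_of_hasSum _ fun x => ?_
  simpa only [ZMod.val_natCast] using hasSum_natCast_sub_mod_mul_pow_div_factorial n x

/-- asymptotics of the mean of the inverse compound
Poisson–Erlang process: the correction term tends to `(n+1)/2` (resp.
`(n+1)/(2nλ)` for the mean itself, after subtracting the linear part). -/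
theorem stmt19 (n : ℕ) (hn : 1 ≤ n) :
    Tendsto (fun x : ℝ => Real.exp (-x) *
        ∑ k ∈ Finset.Icc 1 n,
          ((n : ℝ) - (k : ℝ) + 1) * x ^ (k - 1) * ml2 (n : ℝ) (k : ℝ) (x ^ n))
      atTop (nhds (((n : ℝ) + 1) / 2)) ∧
    ∀ lam β : ℝ, 0 < lam → 0 < β →
      Tendsto (fun t : ℝ =>
          (β * t / ((n : ℝ) * lam) +
            Real.exp (-(β * t)) / ((n : ℝ) * lam) *
              ∑ k ∈ Finset.Icc 1 n,
                ((n : ℝ) - (k : ℝ) + 1) * (β * t) ^ (k - 1) *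
                  ml2 (n : ℝ) (k : ℝ) ((β * t) ^ n)) -
            β * t / ((n : ℝ) * lam))
        atTop (nhds (((n : ℝ) + 1) / (2 * (n : ℝ) * lam))) := by
  have : NeZero n := ⟨by omega⟩
  refine ⟨tendsto_exp_neg_mul_sum_ml2 n, fun lam β _ hβ => ?_⟩
  have h := ((tendsto_exp_neg_mul_sum_ml2 n).comp (tendsto_id.const_mul_atTop hβ)).div_const
    ((n : ℝ) * lam)
  rw [div_div, ← mul_assoc] at h
  refine h.congr fun t => ?_
  simp only [Function.comp_apply, id]
  ring
end
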